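/- arXiv:1902.09741 — 6 statements merged into one kernel-verified Lean document; each statement's English description precedes it below -/
import Mathlib

section
/- The number of admissible cyclic words of length 2n equals 2^{n-1} · (n-1)!. -/
/-!
Rotations act freely on admissible words, so the number of cyclic words is the number of
admissible words divided by `2n`. Writing a position of `ZMod (2n)` as `x + b n` with
`x ∈ ZMod n` and `b ∈ Bool`, the antipodal positions `p`, `p + n` share `x`. An admissible word
is then a bijection from letters to antipodal pairs (`n!` choices) together with, for each
letter, the half of the circle holding its unprimed copy (`2^n` choices).
-/

/-- An admissible cyclic word of length `2n`: an arrangement of the letters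
`1,…,n,1',…,n'` (encoded as `Fin n × Bool`, `false` = unprimed) on the `2n` cyclic
positions `ZMod (2n)`, each letter appearing exactly once, such that for each `i` the
letters `i` and `i'` are antipodal (exactly `n-1` letters between them). -/
def AdmWord (n : ℕ) : Type :=
  {w : ZMod (2 * n) ≃ Fin n × Bool //
    ∀ ℓ : Fin n, w.symm (ℓ, true) = w.symm (ℓ, false) + (n : ZMod (2 * n))}

/-- Two cyclic words are identified iff they differ by a cyclic rotation. -/
def rotSetoid (n : ℕ) : Setoid (AdmWord n) where
  r w₁ w₂ := ∃ r : ZMod (2 * n), ∀ p, w₁.1 p = w₂.1 (p + r)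
  iseqv := by
    refine ⟨fun w => ⟨0, fun p => by simp⟩, ?_, ?_⟩
    · rintro w₁ w₂ ⟨r, h⟩
      exact ⟨-r, fun p => by rw [h (p + -r)]; ring_nf⟩
    · rintro w₁ w₂ w₃ ⟨r, h⟩ ⟨r', h'⟩
      exact ⟨r + r', fun p => by rw [h p, h' (p + r), add_assoc]⟩

section FlipEquivariant
variable {ι β : Type*}

def IsFlipEquivariant (τ : ι × Bool ≃ β × Bool) : Prop :=
  ∀ i, τ (i, true) = ((τ (i, false)).1, !(τ (i, false)).2)

namespace IsFlipEquivariant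
variable {τ : ι × Bool ≃ β × Bool}

lemma apply_eq (hτ : IsFlipEquivariant τ) (i : ι) (b : Bool) :
    τ (i, b) = ((τ (i, false)).1, xor (τ (i, false)).2 b) := by
  cases b
  · simp
  · simpa using hτ i

lemma bijective_fst (hτ : IsFlipEquivariant τ) :
    Function.Bijective fun i => (τ (i, false)).1 := by
  refine ⟨fun i j hij => ?_, fun x => ?_⟩
  · have : τ (i, false) = τ (j, xor (τ (j, false)).2 (τ (i, false)).2) := by
      rw [hτ.apply_eq j]
      exact Prod.ext hij (by simp)
    exact congrArg Prod.fst (τ.injective this)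
  · obtain ⟨⟨i, b⟩, h⟩ := τ.surjective (x, false)
    exact ⟨i, by simpa [hτ.apply_eq i b] using congrArg Prod.fst h⟩

end IsFlipEquivariant

noncomputable def flipEquivariantEquiv :
    {τ : ι × Bool ≃ β × Bool // IsFlipEquivariant τ} ≃ (ι ≃ β) × (ι → Bool) where
  toFun τ := (Equiv.ofBijective _ τ.2.bijective_fst, fun i => (τ.1 (i, false)).2)
  invFun p := ⟨Equiv.prodShear p.1 fun i => Function.Involutive.toPerm (xor (p.2 i))
      (by intro b; simp), fun i => by
      show (p.1 i, xor (p.2 i) true) = (p.1 i, !xor (p.2 i) false)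
      cases p.2 i <;> rfl⟩
  left_inv τ := Subtype.ext <| Equiv.ext fun ⟨i, b⟩ => (τ.2.apply_eq i b).symm
  right_inv p := Prod.ext (Equiv.ext fun _ => rfl) (funext fun i => Bool.xor_false (p.2 i))

end FlipEquivariant

section Antipodal
variable {n : ℕ} [NeZero n]

lemma antipodal_injective : Function.Injective
    fun p : ZMod n × Bool => (p.1.val : ZMod (2 * n)) + if p.2 then n else 0 := by
  rintro ⟨x, b⟩ ⟨y, c⟩ h
  have hcast : ∀ (z : ZMod n) (d : Bool),
      ZMod.castHom (dvd_mul_left n 2) (ZMod n) ((z.val : ZMod (2 * n)) + if d then n else 0) = z := by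
    intro z d
    cases d <;> simp [-ZMod.natCast_val, ZMod.natCast_zmod_val]
  have hxy : x = y := by
    simpa only [hcast] using congrArg (ZMod.castHom (dvd_mul_left n 2) (ZMod n)) h
  subst hxy
  have hn : (n : ZMod (2 * n)) ≠ 0 := by
    rw [Ne, ZMod.natCast_eq_zero_iff]
    exact fun hdvd => NeZero.ne n (Nat.eq_zero_of_dvd_of_lt hdvd (by have := NeZero.pos n; omega))
  cases b <;> cases c <;> simp_all

noncomputable def antipodalEquiv (n : ℕ) [NeZero n] : ZMod n × Bool ≃ ZMod (2 * n) :=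
  Equiv.ofBijective _ <| (Fintype.bijective_iff_injective_and_card _).2
    ⟨antipodal_injective, by simp [ZMod.card, mul_comm]⟩

lemma antipodalEquiv_not (x : ZMod n) (b : Bool) :
    antipodalEquiv n (x, !b) = antipodalEquiv n (x, b) + n := by
  have h : (n + n : ZMod (2 * n)) = 0 := by
    simpa [two_mul] using ZMod.natCast_self (2 * n)
  cases b <;> simp [antipodalEquiv, add_assoc, h]

end Antipodal

noncomputable def admWordEquiv (n : ℕ) [NeZero n] :
    AdmWord n ≃ {τ : Fin n × Bool ≃ ZMod n × Bool // IsFlipEquivariant τ} :=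
  Equiv.subtypeEquiv
    ((Equiv.symmEquiv _ _).trans (Equiv.equivCongr (Equiv.refl _) (antipodalEquiv n).symm))
    fun w => forall_congr' fun ℓ => by
      change w.symm (ℓ, true) = w.symm (ℓ, false) + n ↔
        (antipodalEquiv n).symm (w.symm (ℓ, true)) =
          (((antipodalEquiv n).symm (w.symm (ℓ, false))).1,
            !((antipodalEquiv n).symm (w.symm (ℓ, false))).2)
      rw [Equiv.symm_apply_eq (antipodalEquiv n), antipodalEquiv_not, Prod.mk.eta,
        Equiv.apply_symm_apply]

lemma card_admWord (n : ℕ) [NeZero n] : Nat.card (AdmWord n) = n.factorial * 2 ^ n := by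
  rw [Nat.card_congr ((admWordEquiv n).trans flipEquivariantEquiv), Nat.card_prod,
    Nat.card_eq_fintype_card, Fintype.card_equiv (ZMod.finEquiv n).toEquiv]
  simp

section Rotation
variable {n : ℕ}

instance : AddAction (ZMod (2 * n)) (AdmWord n) where
  vadd r w := ⟨(Equiv.addRight r).trans w.1, fun ℓ => by simp [w.2 ℓ, add_right_comm]⟩
  zero_vadd w := Subtype.ext <| Equiv.ext fun p => congrArg w.1 (add_zero p)
  add_vadd r s w := Subtype.ext <| Equiv.ext fun p => congrArg w.1 (add_assoc p r s).symm

lemma rotSetoid_eq_orbitRel : rotSetoid n = AddAction.orbitRel (ZMod (2 * n)) (AdmWord n) := by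
  ext w₁ w₂
  exact ⟨fun ⟨r, h⟩ => ⟨r, Subtype.ext <| Equiv.ext fun p => (h p).symm⟩,
    fun ⟨r, h⟩ => ⟨r, fun p => by rw [← h]; rfl⟩⟩

lemma AdmWord.stabilizer_eq_bot (w : AdmWord n) : AddAction.stabilizer (ZMod (2 * n)) w = ⊥ := by
  ext r
  refine ⟨fun hr => ?_, fun hr => by simp_all⟩
  have h0 : w.1 (0 + r) = w.1 0 :=
    congrArg (fun v : AdmWord n => v.1 0) (AddAction.mem_stabilizer_iff.1 hr)
  simpa using w.1.injective h0

lemma card_quotient_rotSetoid_mul :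
    Nat.card (Quotient (rotSetoid n)) * (2 * n) = Nat.card (AdmWord n) := by
  rw [rotSetoid_eq_orbitRel, Nat.card_congr (AddAction.selfEquivOrbitsQuotientProd
    AdmWord.stabilizer_eq_bot), Nat.card_prod, Nat.card_zmod]

end Rotation

/-- the number of admissible cyclic words of length `2n`
equals `2^{n-1} · (n-1)!`. -/
theorem card_admissible_cyclic_words (n : ℕ) (hn : 1 ≤ n) :
    Nat.card (Quotient (rotSetoid n)) = 2 ^ (n - 1) * Nat.factorial (n - 1) := by
  obtain ⟨m, rfl⟩ := Nat.exists_eq_add_of_le' hn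
  have h := card_quotient_rotSetoid_mul (n := m + 1)
  rw [card_admWord, Nat.factorial_succ, pow_succ] at h
  apply Nat.eq_of_mul_eq_mul_right (show 0 < 2 * (m + 1) by omega)
  rw [h, Nat.add_sub_cancel]
  ring
end

section
/- Let Γ: I → Lo_n^1 be flag-convex, meaning Γ(t)⁻¹ Γ'(t) has strictly positive entries in positions (j+1, j) and zero entries elsewhere for all t. Let P_η be the permutation matrix of the top permutation η, with (P_η)_{i, n+1-i} = 1. Then the curve Γ_⋆(t) = P_η (Γ(-t))^{-⊤} P_η also takes values in Lo_n^1 and is flag-convex. -/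
open Matrix

variable (n : ℕ)

/-- Lower triangular with unit diagonal (`Lo_n^1`). -/
def unitri (L : Matrix (Fin n) (Fin n) ℝ) : Prop :=
  (∀ i, L i i = 1) ∧ ∀ i j : Fin n, (i : ℕ) < (j : ℕ) → L i j = 0

/-- The set `𝒥`: strictly positive entries on the subdiagonal, zero elsewhere. -/
def inJ (A : Matrix (Fin n) (Fin n) ℝ) : Prop :=
  ∀ i j : Fin n, ((i : ℕ) = (j : ℕ) + 1 → 0 < A i j) ∧ ((i : ℕ) ≠ (j : ℕ) + 1 → A i j = 0)

/-- The permutation matrix of the top permutation: `(P_η)_{i, n+1-i} = 1`. -/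
def Peta : Matrix (Fin n) (Fin n) ℝ :=
  Matrix.of fun i j => if (i : ℕ) + (j : ℕ) + 1 = n then 1 else 0

/-! The dual curve is `Γ_⋆ = P_η (Γ ∘ neg)^{-⊤} P_η`, and `M ↦ P_η Mᵀ P_η` is an anti-automorphism
of the matrix ring which reverses the order of the indices; it therefore preserves `Lo_n^1` and the
subdiagonal pattern `𝒥`. Since `(Γ⁻¹)' = -Γ⁻¹ Γ' Γ⁻¹`, a direct computation gives
`Γ_⋆(t)⁻¹ Γ_⋆'(t) = P_η (Γ(-t)⁻¹ Γ'(-t))ᵀ P_η`, which lies in `𝒥`. -/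

section MatrixDerivative

variable {m : Type*} [Fintype m] [DecidableEq m] {f : ℝ → Matrix m m ℝ} {f' : Matrix m m ℝ}
  {t : ℝ}

-- Any normed-algebra structure inducing the product topology would do; only entrywise
-- statements leave this section.
attribute [local instance] Matrix.linftyOpNormedRing Matrix.linftyOpNormedAlgebra

lemma hasDerivAt_of_hasDerivAt_apply (h : ∀ i j, HasDerivAt (fun s => f s i j) (f' i j) t) :
    HasDerivAt f f' t := by
  have hf : f = fun s => ∑ i, ∑ j, single i j (f s i j) :=
    funext fun s => matrix_eq_sum_single (f s)
  rw [hf, matrix_eq_sum_single f']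
  refine HasDerivAt.fun_sum fun i _ => HasDerivAt.fun_sum fun j _ => ?_
  simpa [smul_single] using (h i j).smul_const (single i j (1 : ℝ))

lemma HasDerivAt.matrix_apply (h : HasDerivAt f f' t) (i j : m) :
    HasDerivAt (fun s => f s i j) (f' i j) t :=
  (entryLinearMap ℝ ℝ i j).toContinuousLinearMap.hasFDerivAt.comp_hasDerivAt t h

lemma HasDerivAt.matrix_inv (h : HasDerivAt f f' t) (hu : IsUnit (f t)) :
    HasDerivAt (fun s => (f s)⁻¹) (-((f t)⁻¹ * f' * (f t)⁻¹)) t := by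
  have hinv := hasFDerivAt_ringInverse (𝕜 := ℝ) hu.unit
  rw [hu.unit_spec] at hinv
  have hcomp := hinv.comp_hasDerivAt t h
  simp only [coe_units_inv, hu.unit_spec, Function.comp_def, ← nonsing_inv_eq_ringInverse]
    at hcomp
  exact hcomp

lemma hasDerivAt_matrix_inv_apply (h : ∀ i j, HasDerivAt (fun s => f s i j) (f' i j) t)
    (hu : IsUnit (f t)) (i j : m) :
    HasDerivAt (fun s => (f s)⁻¹ i j) ((-((f t)⁻¹ * f' * (f t)⁻¹)) i j) t :=
  ((hasDerivAt_of_hasDerivAt_apply h).matrix_inv hu).matrix_apply i j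

end MatrixDerivative

lemma Matrix.IsLowerTriangular.mul_apply_self {m R : Type*} [Fintype m] [LinearOrder m]
    [NonUnitalNonAssocSemiring R] {A B : Matrix m m R} (hA : A.IsLowerTriangular)
    (hB : B.IsLowerTriangular) (i : m) : (A * B) i i = A i i * B i i := by
  rw [mul_apply]
  refine Finset.sum_eq_single i (fun k _ hki => ?_) (by simp)
  rcases hki.lt_or_gt with hki | hik
  · simp [hB hki]
  · simp [hA hik]

lemma Matrix.inv_transpose_submatrix_mul {m R : Type*} [Fintype m] [DecidableEq m] [CommRing R]
    (e : m ≃ m) (N M : Matrix m m R) :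
    (Nᵀ.submatrix e e)⁻¹ * Mᵀ.submatrix e e = (M * N⁻¹)ᵀ.submatrix e e := by
  rw [inv_submatrix_equiv, ← transpose_nonsing_inv, submatrix_mul_equiv, ← transpose_mul]

variable {n}

lemma peta_eq_toMatrix_revPerm : Peta n = Fin.revPerm.toPEquiv.toMatrix := by
  ext i j
  have hrev : (i : ℕ) + j + 1 = n ↔ Fin.rev i = j := by rw [Fin.ext_iff, Fin.val_rev]; omega
  simp [Peta, PEquiv.toMatrix_apply, hrev]

lemma peta_mul_mul_peta (M : Matrix (Fin n) (Fin n) ℝ) :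
    Peta n * M * Peta n = M.submatrix Fin.revPerm Fin.revPerm := by
  rw [peta_eq_toMatrix_revPerm, PEquiv.toMatrix_toPEquiv_mul, PEquiv.mul_toMatrix_toPEquiv,
    submatrix_submatrix, Fin.revPerm_symm]
  rfl

lemma unitri.isLowerTriangular {L : Matrix (Fin n) (Fin n) ℝ} (h : unitri n L) :
    L.IsLowerTriangular :=
  fun i j hij => h.2 i j hij

lemma unitri.det_eq_one {L : Matrix (Fin n) (Fin n) ℝ} (h : unitri n L) : L.det = 1 := by
  simp [det_of_isLowerTriangular L h.isLowerTriangular, h.1]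

lemma unitri.inv {L : Matrix (Fin n) (Fin n) ℝ} (h : unitri n L) : unitri n L⁻¹ := by
  have hdet : IsUnit L.det := by simp [h.det_eq_one]
  have : Invertible L := L.invertibleOfIsUnitDet hdet
  have hinv : L⁻¹.IsLowerTriangular := blockTriangular_inv_of_blockTriangular h.isLowerTriangular
  refine ⟨fun i => ?_, fun i j hij => hinv hij⟩
  simpa [h.1, nonsing_inv_mul L hdet] using (hinv.mul_apply_self h.isLowerTriangular i).symm

lemma unitri.transpose_submatrix_rev {L : Matrix (Fin n) (Fin n) ℝ} (h : unitri n L) :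
    unitri n (Lᵀ.submatrix Fin.revPerm Fin.revPerm) :=
  ⟨fun _ => h.1 _, fun _ _ hij => h.2 _ _ (Fin.rev_lt_rev.2 hij)⟩

lemma inJ.transpose_submatrix_rev {A : Matrix (Fin n) (Fin n) ℝ} (h : inJ n A) :
    inJ n (Aᵀ.submatrix Fin.revPerm Fin.revPerm) := by
  intro i j
  have hsub : (i : ℕ) = j + 1 ↔ (Fin.rev j : ℕ) = Fin.rev i + 1 := by
    simp only [Fin.val_rev]; omega
  simpa [hsub] using h (Fin.rev j) (Fin.rev i)

/-- if `Γ : I → Lo_n^1` is flag-convex then so is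
`Γ_⋆(t) = P_η (Γ(-t))^{-⊤} P_η` (defined on `-I`), with values in `Lo_n^1`. -/
theorem dual_curve_flag_convex (I : Set ℝ)
    (Γ Γ' : ℝ → Matrix (Fin n) (Fin n) ℝ)
    (hL : ∀ t ∈ I, unitri n (Γ t))
    (hderiv : ∀ t ∈ I, ∀ i j : Fin n, HasDerivAt (fun s => Γ s i j) (Γ' t i j) t)
    (hconv : ∀ t ∈ I, inJ n ((Γ t)⁻¹ * Γ' t)) :
    ∃ D : ℝ → Matrix (Fin n) (Fin n) ℝ,
      ∀ t : ℝ, -t ∈ I →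
        unitri n (Peta n * ((Γ (-t))⁻¹)ᵀ * Peta n) ∧
        (∀ i j : Fin n,
          HasDerivAt (fun s => (Peta n * ((Γ (-s))⁻¹)ᵀ * Peta n) i j) (D t i j) t) ∧
        inJ n ((Peta n * ((Γ (-t))⁻¹)ᵀ * Peta n)⁻¹ * D t) := by
  refine ⟨fun t => ((Γ (-t))⁻¹ * Γ' (-t) * (Γ (-t))⁻¹)ᵀ.submatrix Fin.revPerm Fin.revPerm,
    fun t ht => ?_⟩
  simp only [peta_mul_mul_peta]
  have hG := hL (-t) ht
  refine ⟨hG.inv.transpose_submatrix_rev, fun i j => ?_, ?_⟩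
  · have hreflect : ∀ i j, HasDerivAt (fun s => Γ (-s) i j) ((-Γ' (-t)) i j) t :=
      fun i j => by
        simpa [Function.comp_def] using (hderiv (-t) ht i j).comp t (hasDerivAt_neg t)
    have hunit : IsUnit (Γ (-t)) := (isUnit_iff_isUnit_det _).2 (by simp [hG.det_eq_one])
    simpa only [submatrix_apply, transpose_apply, Fin.revPerm_apply, Matrix.mul_neg,
      Matrix.neg_mul, neg_neg] using
      hasDerivAt_matrix_inv_apply hreflect hunit (Fin.rev j) (Fin.rev i)
  · rw [inv_transpose_submatrix_mul,
      mul_nonsing_inv_cancel_right _ _ (by simp [hG.inv.det_eq_one])]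
    exact (hconv (-t) ht).transpose_submatrix_rev
end

section
/- A matrix L ∈ Lo_n^1 is totally negative if and only if L⁻¹ is totally positive. -/
open Matrix

variable (n : ℕ)

/-- `L` is totally positive in `Lo_n^1`. -/
def totPos (L : Matrix (Fin n) (Fin n) ℝ) : Prop :=
  unitri n L ∧
  ∀ (k : ℕ) (r c : Fin k → Fin n), StrictMono r → StrictMono c →
    (∃ M : Matrix (Fin n) (Fin n) ℝ, unitri n M ∧ (M.submatrix r c).det ≠ 0) →
    0 < (L.submatrix r c).det

/-- The diagonal matrix `P = diag(1, -1, 1, …, (-1)^{n-1})`. -/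
def Pdiag : Matrix (Fin n) (Fin n) ℝ :=
  Matrix.diagonal fun i => (-1 : ℝ) ^ (i : ℕ)

/-- `L` is totally negative: `P L P` is totally positive. -/
def totNeg (L : Matrix (Fin n) (Fin n) ℝ) : Prop :=
  totPos n (Pdiag n * L * Pdiag n)

/-!
Jacobi's complementary minor formula: for invertible `A` of size `k + m`, increasing
`r c : Fin k → Fin (k + m)` and the increasing enumerations `r'`, `c'` of their complements,
`det A * det A⁻¹[r, c] = (-1) ^ (∑ r + ∑ c) * det A[c', r']`.
It is the block identity `det A * det (A⁻¹)₁₁ = det A₂₂` after reordering rows and columns by the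
shuffles `c ⊔ c'` and `r ⊔ r'`, whose signs are `(-1) ^ (∑ a - ∑ i)`. Conjugating by `P` multiplies
the `[r, c]`-minor by the same sign `(-1) ^ (∑ r + ∑ c)`, so for `A ∈ Lo_n^1` the `[r, c]`-minor of
`P A⁻¹ P` equals the `[c', r']`-minor of `A`. With `A = PLP` this turns the minors of `L⁻¹` into
complementary minors of `PLP`, with `A = L⁻¹` the minors of `PLP` into complementary minors of
`L⁻¹`, and with `A = P M⁻¹ P` it shows that `[c', r']` is not identically zero on `Lo_n^1`
whenever `[r, c]` is not.
-/

open Finset Equiv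

namespace StrictMono

variable {k m : ℕ} {a : Fin k → Fin (k + m)}

theorem card_compl_image (ha : StrictMono a) : #(univ.image a)ᶜ = m := by
  rw [card_compl, card_image_of_injective _ ha.injective]
  simp

noncomputable def compl (ha : StrictMono a) : Fin m → Fin (k + m) :=
  (univ.image a)ᶜ.orderEmbOfFin ha.card_compl_image

theorem compl_strictMono (ha : StrictMono a) : StrictMono ha.compl :=
  (orderEmbOfFin _ _).strictMono

theorem compl_ne (ha : StrictMono a) (i : Fin k) (j : Fin m) : ha.compl j ≠ a i := fun h =>
  mem_compl.1 (orderEmbOfFin_mem _ ha.card_compl_image j) (h ▸ mem_image_of_mem a (mem_univ i) :)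

noncomputable def shuffle (ha : StrictMono a) : Fin k ⊕ Fin m ≃ Fin (k + m) :=
  Equiv.ofBijective (Sum.elim a ha.compl) <| by
    refine (Fintype.bijective_iff_injective_and_card _).2 ⟨?_, by simp⟩
    rintro (i | j) (i' | j') h
    · exact congrArg _ (ha.injective h)
    · exact absurd h.symm (ha.compl_ne i j')
    · exact absurd h (ha.compl_ne i' j)
    · exact congrArg _ (ha.compl_strictMono.injective h)

@[simp] theorem shuffle_inl (ha : StrictMono a) (i : Fin k) : ha.shuffle (.inl i) = a i := rfl

@[simp] theorem shuffle_inr (ha : StrictMono a) (j : Fin m) : ha.shuffle (.inr j) = ha.compl j :=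
  rfl

theorem card_compl_lt_add (ha : StrictMono a) (i : Fin k) :
    #{j | ha.compl j < a i} + i = a i := by
  have h := Fintype.sum_equiv ha.shuffle (fun p => if ha.shuffle p < a i then 1 else 0)
    (fun x => if x < a i then 1 else 0) (fun _ => rfl)
  rw [Fintype.sum_sum_type] at h
  simp only [shuffle_inl, shuffle_inr, ha.lt_iff_lt, ← card_filter, filter_gt_eq_Iio,
    Fin.card_Iio] at h
  rw [card_filter]
  exact (add_comm _ _).trans h

theorem sign_shuffle (ha : StrictMono a) :
    Perm.sign (finSumFinEquiv.symm.trans ha.shuffle) =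
      (-1) ^ (∑ i, (a i : ℕ) + ∑ i : Fin k, (i : ℕ)) := by
  have hcc (i i' : Fin k) : Fin.castAdd m i < Fin.castAdd m i' ↔ i < i' := Iff.rfl
  have hcn (i : Fin k) (j : Fin m) : Fin.castAdd m i < Fin.natAdd k j := by
    simp only [Fin.lt_def, Fin.val_castAdd, Fin.val_natAdd]; omega
  have hnc (i : Fin k) (j : Fin m) : ¬ Fin.natAdd k j < Fin.castAdd m i := (hcn i j).asymm
  have hrow (i : Fin k) :
      ∏ j, (if a i < ha.compl j then 1 else -1 : ℤˣ) = (-1) ^ #{j | ha.compl j < a i} := by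
    rw [prod_ite, prod_const_one, one_mul, prod_const]
    congr 2
    ext j
    simp [(ha.compl_ne i j).le_iff_lt]
  rw [Perm.sign_eq_prod_prod_Ioi]
  -- the only inversions pair a position `i < k` with a position `k + j` such that `compl j < a i`
  simp +contextual only [← filter_lt_eq_Ioi, prod_filter, Fin.prod_univ_add, Equiv.trans_apply,
    finSumFinEquiv_symm_apply_castAdd, finSumFinEquiv_symm_apply_natAdd, shuffle_inl, shuffle_inr,
    hcc, hcn, hnc, Fin.natAdd_lt_natAdd_iff, ha.lt_iff_lt, ha.compl_strictMono.lt_iff_lt, if_true,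
    if_false, ite_self, hrow, prod_const_one, one_mul, mul_one, prod_pow_eq_pow_sum]
  have hsum : ∑ i, (a i : ℕ) + ∑ i : Fin k, (i : ℕ) =
      ∑ i, #{j | ha.compl j < a i} + 2 * ∑ i : Fin k, (i : ℕ) := by
    simp only [← ha.card_compl_lt_add, sum_add_distrib]
    ring
  rw [hsum, pow_add, pow_mul, neg_one_sq, one_pow, mul_one]

end StrictMono

theorem Matrix.det_mul_det_inv_toBlocks₁₁ {R m p : Type*} [CommRing R] [Fintype m] [Fintype p]
    [DecidableEq m] [DecidableEq p] (A : Matrix (m ⊕ p) (m ⊕ p) R) (hA : IsUnit A.det) :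
    A.det * A⁻¹.toBlocks₁₁.det = A.toBlocks₂₂.det := by
  set B := A⁻¹
  have h : A * B = 1 := mul_nonsing_inv A hA
  rw [← fromBlocks_toBlocks A, ← fromBlocks_toBlocks B, fromBlocks_multiply, ← fromBlocks_one,
    fromBlocks_inj] at h
  have key : A * fromBlocks B.toBlocks₁₁ 0 B.toBlocks₂₁ 1 =
      fromBlocks 1 A.toBlocks₁₂ 0 A.toBlocks₂₂ := by
    conv_lhs => rw [← fromBlocks_toBlocks A]
    rw [fromBlocks_multiply]
    simp [h.1, h.2.2.1]
  simpa [det_fromBlocks_zero₁₂, det_fromBlocks_zero₂₁] using congrArg det key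

section Jacobi

variable {R : Type*} [CommRing R] {k m : ℕ} {r c : Fin k → Fin (k + m)}

theorem Matrix.det_submatrix_shuffle (A : Matrix (Fin (k + m)) (Fin (k + m)) R)
    (hr : StrictMono r) (hc : StrictMono c) :
    (A.submatrix hc.shuffle hr.shuffle).det =
      (-1) ^ (∑ i, (r i : ℕ) + ∑ i, (c i : ℕ)) * A.det := by
  set σr := finSumFinEquiv.symm.trans hr.shuffle
  set σc := finSumFinEquiv.symm.trans hc.shuffle
  have hA : A.submatrix hc.shuffle hr.shuffle =
      ((A.submatrix σc id).submatrix id σr).submatrix finSumFinEquiv finSumFinEquiv := by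
    ext i j
    simp [σr, σc]
  have hsign : Perm.sign σr * Perm.sign σc = (-1) ^ (∑ i, (r i : ℕ) + ∑ i, (c i : ℕ)) := by
    rw [hr.sign_shuffle, hc.sign_shuffle, ← pow_add,
      show ∑ i, (r i : ℕ) + ∑ i : Fin k, (i : ℕ) + (∑ i, (c i : ℕ) + ∑ i : Fin k, (i : ℕ)) =
        ∑ i, (r i : ℕ) + ∑ i, (c i : ℕ) + 2 * ∑ i : Fin k, (i : ℕ) by ring,
      pow_add, pow_mul, neg_one_sq, one_pow, mul_one]
  rw [hA, det_submatrix_equiv_self, det_permute', det_permute, ← mul_assoc, ← Int.cast_mul,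
    ← Units.val_mul, hsign]
  push_cast
  rfl

theorem Matrix.det_mul_det_inv_submatrix (A : Matrix (Fin (k + m)) (Fin (k + m)) R)
    (hA : IsUnit A.det) (hr : StrictMono r) (hc : StrictMono c) :
    A.det * (A⁻¹.submatrix r c).det =
      (-1) ^ (∑ i, (r i : ℕ) + ∑ i, (c i : ℕ)) * (A.submatrix hc.compl hr.compl).det := by
  set B := A.submatrix hc.shuffle hr.shuffle
  have hB : B.det = (-1) ^ (∑ i, (r i : ℕ) + ∑ i, (c i : ℕ)) * A.det :=
    A.det_submatrix_shuffle hr hc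
  have hsq : ((-1 : R) ^ (∑ i, (r i : ℕ) + ∑ i, (c i : ℕ))) ^ 2 = 1 := by
    rw [← pow_mul, pow_mul', neg_one_sq, one_pow]
  have h := B.det_mul_det_inv_toBlocks₁₁ (by rw [hB]; exact (isUnit_neg_one.pow _).mul hA)
  rw [inv_submatrix_equiv, hB] at h
  change _ * (A⁻¹.submatrix r c).det = (A.submatrix hc.compl hr.compl).det at h
  rw [← h]
  linear_combination (A.det * (A⁻¹.submatrix r c).det) * hsq.symm

end Jacobi

section Pdiag

variable {n}

theorem Pdiag_mul_Pdiag : Pdiag n * Pdiag n = 1 := by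
  simp [Pdiag, ← pow_add, ← two_mul, pow_mul]

theorem Pdiag_mul_Pdiag_conj_mul_Pdiag (A : Matrix (Fin n) (Fin n) ℝ) :
    Pdiag n * (Pdiag n * A * Pdiag n) * Pdiag n = A := by
  simp only [← mul_assoc, Pdiag_mul_Pdiag, one_mul]
  rw [mul_assoc, Pdiag_mul_Pdiag, mul_one]

theorem inv_Pdiag_mul_mul_Pdiag (A : Matrix (Fin n) (Fin n) ℝ) :
    (Pdiag n * A * Pdiag n)⁻¹ = Pdiag n * A⁻¹ * Pdiag n := by
  rw [Matrix.mul_inv_rev, Matrix.mul_inv_rev, inv_eq_left_inv Pdiag_mul_Pdiag, mul_assoc]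

theorem det_submatrix_Pdiag_mul_mul_Pdiag {k : ℕ} (A : Matrix (Fin n) (Fin n) ℝ)
    (r c : Fin k → Fin n) :
    ((Pdiag n * A * Pdiag n).submatrix r c).det =
      (-1) ^ (∑ i, (r i : ℕ) + ∑ i, (c i : ℕ)) * (A.submatrix r c).det := by
  have h : (Pdiag n * A * Pdiag n).submatrix r c =
      diagonal (fun i => (-1 : ℝ) ^ (r i : ℕ)) * A.submatrix r c *
        diagonal (fun j => (-1 : ℝ) ^ (c j : ℕ)) := by
    ext i j
    simp [Pdiag]
  rw [h, det_mul, det_mul, det_diagonal, det_diagonal, prod_pow_eq_pow_sum, prod_pow_eq_pow_sum,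
    pow_add]
  ring

theorem det_mul_det_submatrix_Pdiag_mul_inv_mul_Pdiag {k m : ℕ}
    (A : Matrix (Fin (k + m)) (Fin (k + m)) ℝ) (hA : IsUnit A.det) {r c : Fin k → Fin (k + m)}
    (hr : StrictMono r) (hc : StrictMono c) :
    A.det * ((Pdiag _ * A⁻¹ * Pdiag _).submatrix r c).det =
      (A.submatrix hc.compl hr.compl).det := by
  rw [det_submatrix_Pdiag_mul_mul_Pdiag, mul_left_comm, A.det_mul_det_inv_submatrix hA hr hc,
    ← mul_assoc, ← pow_add, Even.neg_one_pow ⟨_, rfl⟩, one_mul]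

end Pdiag

namespace unitri

variable {n} {L : Matrix (Fin n) (Fin n) ℝ}

theorem isLowerTriangular_s10 (hL : unitri n L) : L.IsLowerTriangular :=
  fun i j hij => hL.2 i j hij

theorem det_eq_one_s10 (hL : unitri n L) : L.det = 1 := by
  simp [det_of_isLowerTriangular L hL.isLowerTriangular_s10, hL.1]

theorem isUnit_det (hL : unitri n L) : IsUnit L.det := by
  simp [hL.det_eq_one_s10]

theorem inv_s10 (hL : unitri n L) : unitri n L⁻¹ := by
  have := L.invertibleOfIsUnitDet hL.isUnit_det
  have hinv : L⁻¹.IsLowerTriangular :=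
    blockTriangular_inv_of_blockTriangular hL.isLowerTriangular_s10
  refine ⟨fun i => ?_, fun i j hij => hinv hij⟩
  have h : (L * L⁻¹) i i = 1 := by simp [mul_nonsing_inv L hL.isUnit_det]
  rwa [mul_apply, sum_eq_single i, hL.1, one_mul] at h
  · intro j _ hji
    rcases hji.lt_or_gt with hj | hj
    · rw [hinv hj, mul_zero]
    · rw [hL.2 i j hj, zero_mul]
  · simp

theorem det_submatrix_Pdiag_mul_inv_mul_Pdiag {k m : ℕ} {A : Matrix (Fin (k + m)) (Fin (k + m)) ℝ}
    (hA : unitri (k + m) A) {r c : Fin k → Fin (k + m)} (hr : StrictMono r) (hc : StrictMono c) :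
    ((Pdiag _ * A⁻¹ * Pdiag _).submatrix r c).det = (A.submatrix hc.compl hr.compl).det := by
  simpa [hA.det_eq_one_s10] using det_mul_det_submatrix_Pdiag_mul_inv_mul_Pdiag A hA.isUnit_det hr hc

theorem Pdiag_mul_mul_Pdiag (hL : unitri n L) : unitri n (Pdiag n * L * Pdiag n) := by
  have h (i j : Fin n) : (Pdiag n * L * Pdiag n) i j = (-1) ^ (i : ℕ) * L i j * (-1) ^ (j : ℕ) := by
    simp [Pdiag]
  refine ⟨fun i => ?_, fun i j hij => ?_⟩
  · rw [h, hL.1, mul_one, ← pow_add, Even.neg_one_pow ⟨_, rfl⟩]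
  · rw [h, hL.2 i j hij, mul_zero, zero_mul]

end unitri

theorem exists_unitri_det_submatrix_compl_ne_zero {k m : ℕ} {r c : Fin k → Fin (k + m)}
    (hr : StrictMono r) (hc : StrictMono c)
    (h : ∃ M, unitri (k + m) M ∧ (M.submatrix r c).det ≠ 0) :
    ∃ M, unitri (k + m) M ∧ (M.submatrix hc.compl hr.compl).det ≠ 0 := by
  obtain ⟨M, hM, hdet⟩ := h
  have hM' := hM.inv_s10.Pdiag_mul_mul_Pdiag
  refine ⟨Pdiag _ * M⁻¹ * Pdiag _, hM', ?_⟩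
  rwa [← hM'.det_submatrix_Pdiag_mul_inv_mul_Pdiag hr hc, inv_Pdiag_mul_mul_Pdiag,
    nonsing_inv_nonsing_inv _ hM.isUnit_det, Pdiag_mul_Pdiag_conj_mul_Pdiag]

/-- `L ∈ Lo_n^1` is totally negative if and only if `L⁻¹` is totally
positive. -/
theorem totNeg_iff_inv_totPos (L : Matrix (Fin n) (Fin n) ℝ) (hL : unitri n L) :
    totNeg n L ↔ totPos n L⁻¹ := by
  constructor
  · rintro ⟨-, hpos⟩
    refine ⟨hL.inv_s10, fun k r c hr hc hrc => ?_⟩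
    obtain ⟨m, rfl⟩ := Nat.exists_eq_add_of_le (Fin.le_of_injective r hr.injective)
    have h := hL.Pdiag_mul_mul_Pdiag.det_submatrix_Pdiag_mul_inv_mul_Pdiag hr hc
    rw [inv_Pdiag_mul_mul_Pdiag, Pdiag_mul_Pdiag_conj_mul_Pdiag] at h
    exact h ▸ hpos m _ _ hc.compl_strictMono hr.compl_strictMono
      (exists_unitri_det_submatrix_compl_ne_zero hr hc hrc)
  · rintro ⟨-, hpos⟩
    refine ⟨hL.Pdiag_mul_mul_Pdiag, fun k r c hr hc hrc => ?_⟩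
    obtain ⟨m, rfl⟩ := Nat.exists_eq_add_of_le (Fin.le_of_injective r hr.injective)
    have h := hL.inv_s10.det_submatrix_Pdiag_mul_inv_mul_Pdiag hr hc
    rw [nonsing_inv_nonsing_inv _ hL.isUnit_det] at h
    exact h ▸ hpos m _ _ hc.compl_strictMono hr.compl_strictMono
      (exists_unitri_det_submatrix_compl_ne_zero hr hc hrc)
end

section
/- For the polynomial flag-convex curve Γ(t) = L_0 · exp(t N_0), where N_0 is lower triangular nilpotent with positive subdiagonal entries and zeros elsewhere and L_0 ∈ Lo_n^1, the entry of Γ(t) in position (i,j) with i > j is a polynomial in t of degree exactly i − j, and the function m_k(t) = det(swminor(Γ(t), k)) is a polynomial in t of degree exactly k(n−k). -/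
open Matrix

variable (n : ℕ)

/-- The southwest `k × k` minor: submatrix of the last `k` rows, first `k` columns. -/
def swminor (L : Matrix (Fin n) (Fin n) ℝ) (k : ℕ) (hk : k ≤ n) :
    Matrix (Fin k) (Fin k) ℝ :=
  L.submatrix (fun i : Fin k => (⟨n - k + (i : ℕ), by have := i.isLt; omega⟩ : Fin n))
    (fun j : Fin k => (⟨(j : ℕ), by have := j.isLt; omega⟩ : Fin n))

/-!
Since `N₀ ^ m` lives on the `m`-th subdiagonal with entries the products of `m` consecutive
subdiagonal entries, `N₀` is nilpotent and `exp (t • N₀)` has `(l, j)` entry `c l j * t ^ (l - j)`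
with `c l j ≠ 0` for `j ≤ l` and `c l j = 0` otherwise. Multiplying on the left by the unipotent
lower triangular `L₀` keeps the degree bound `i - j` and the coefficient `c i j` of `t ^ (i - j)`.

For a polynomial matrix whose `(i, j)` entry has degree at most `a i - b j`, every term of the
Leibniz expansion of the determinant has degree at most `∑ a - ∑ b`, and the coefficient of
`t ^ (∑ a - ∑ b)` is the determinant of the matrix of the top coefficients. For the southwest
`k × k` minor, `∑ a - ∑ b = k (n - k)` and the top-coefficient matrix `c (n - k + i) j` is, up to
nonzero row and column scalings, `((n - k + i).descFactorial j)`, whose determinant is the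
Vandermonde determinant of the distinct nodes `n - k + i`.
-/

open Polynomial Finset
open scoped Nat

theorem NormedSpace.exp_eq_sum_range_of_pow_eq_zero (𝕂 : Type*) {𝔸 : Type*} [Field 𝕂]
    [CharZero 𝕂] [Ring 𝔸] [Algebra 𝕂 𝔸] [TopologicalSpace 𝔸] [IsTopologicalRing 𝔸]
    {x : 𝔸} {k : ℕ} (hx : x ^ k = 0) :
    NormedSpace.exp x = ∑ m ∈ range k, (m !⁻¹ : 𝕂) • x ^ m := by
  rw [NormedSpace.exp_eq_tsum 𝕂]
  exact tsum_eq_sum fun m hm => by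
    rw [pow_eq_zero_of_le (not_lt.1 (mem_range.not.1 hm)) hx, smul_zero]

section Subdiagonal

variable {R : Type*} [CommSemiring R] {n : ℕ} {N : Matrix (Fin n) (Fin n) R} {a : ℕ → R}

theorem Matrix.pow_apply_of_subdiagonal
    (hN : ∀ i j : Fin n, N i j = if (i : ℕ) = j + 1 then a j else 0) (m : ℕ) (i j : Fin n) :
    (N ^ m) i j = if (i : ℕ) = j + m then ∏ p ∈ Ico (j : ℕ) i, a p else 0 := by
  induction m generalizing j with
  | zero =>
    rw [add_zero]
    split_ifs with h <;> simp [Matrix.one_apply, Fin.ext_iff, h]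
  | succ m ih =>
    rw [pow_succ, Matrix.mul_apply]
    by_cases hj : (j : ℕ) + 1 < n
    · rw [Fintype.sum_eq_single ⟨j + 1, hj⟩ fun l hl => by
        rw [hN, if_neg fun h => hl (Fin.ext h), mul_zero]]
      rw [ih, hN, if_pos rfl]
      simp only [← add_assoc, add_right_comm _ 1 m]
      split_ifs with h
      · rw [prod_eq_prod_Ico_succ_bot (show (j : ℕ) < i by omega), mul_comm]
      · rw [zero_mul]
    · rw [if_neg (by omega)]
      exact sum_eq_zero fun l _ => by rw [hN, if_neg (by omega), mul_zero]

theorem Matrix.pow_eq_zero_of_subdiagonal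
    (hN : ∀ i j : Fin n, N i j = if (i : ℕ) = j + 1 then a j else 0) : N ^ n = 0 := by
  ext i j
  rw [Matrix.pow_apply_of_subdiagonal hN, if_neg (by omega), Matrix.zero_apply]

end Subdiagonal

theorem Matrix.exists_subdiagonal_ne_zero {R : Type*} [Semiring R] [Nontrivial R] {n : ℕ}
    {N : Matrix (Fin n) (Fin n) R}
    (hN : ∀ i j : Fin n, ((i : ℕ) = j + 1 → N i j ≠ 0) ∧ ((i : ℕ) ≠ j + 1 → N i j = 0)) :
    ∃ a : ℕ → R, (∀ p, a p ≠ 0) ∧ ∀ i j : Fin n, N i j = if (i : ℕ) = j + 1 then a j else 0 := by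
  refine ⟨fun p => if h : p + 1 < n then N ⟨p + 1, h⟩ ⟨p, by omega⟩ else 1, fun p => ?_,
    fun i j => ?_⟩ <;> dsimp only
  · split_ifs
    · exact (hN _ _).1 rfl
    · exact one_ne_zero
  · by_cases h : (i : ℕ) = j + 1
    · rw [if_pos h, dif_pos (h ▸ i.isLt)]
      exact congrArg (N · j) (Fin.ext h)
    · rw [if_neg h]
      exact (hN i j).2 h

section GradedDegrees

variable {R : Type*} [CommRing R]

theorem Polynomial.coeff_prod_sum_of_natDegree_le {ι : Type*} (s : Finset ι) (f : ι → R[X])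
    (d : ι → ℕ) (h : ∀ i ∈ s, (f i).natDegree ≤ d i) :
    (∏ i ∈ s, f i).coeff (∑ i ∈ s, d i) = ∏ i ∈ s, (f i).coeff (d i) := by
  induction s using Finset.cons_induction with
  | empty => simp
  | cons i s hi ih =>
    have hs : ∀ j ∈ s, (f j).natDegree ≤ d j := fun j hj => h j (mem_cons_of_mem hj)
    rw [prod_cons, sum_cons, prod_cons, coeff_mul_add_eq_of_natDegree_le (h i (mem_cons_self i s))
      ((natDegree_prod_le s f).trans (sum_le_sum hs)), ih hs]

/-- Entry `(i, j)` has degree at most `a i - b j`; as this difference is truncated in `ℕ`, the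
entries with `a i < b j` are required to vanish. -/
def Matrix.IsGradedBy {ι κ : Type*} (P : Matrix ι κ R[X]) (a : ι → ℕ) (b : κ → ℕ) : Prop :=
  ∀ i j, (P i j).natDegree ≤ a i - b j ∧ (a i < b j → P i j = 0)

namespace Matrix.IsGradedBy

theorem submatrix {ι κ ι' κ' : Type*} {P : Matrix ι κ R[X]} {a : ι → ℕ} {b : κ → ℕ}
    (hP : P.IsGradedBy a b) (r : ι' → ι) (c : κ' → κ) :
    (P.submatrix r c).IsGradedBy (a ∘ r) (b ∘ c) :=
  fun i j => hP (r i) (c j)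

section Det

variable {m : Type*} [Fintype m] {P : Matrix m m R[X]} {a b : m → ℕ}

theorem prod_perm (hP : P.IsGradedBy a b) (σ : Equiv.Perm m) :
    (∏ i, P (σ i) i).natDegree ≤ ∑ i, a i - ∑ i, b i ∧
      (∏ i, P (σ i) i).coeff (∑ i, a i - ∑ i, b i) =
        ∏ i, (P (σ i) i).coeff (a (σ i) - b i) := by
  by_cases hσ : ∀ i, b i ≤ a (σ i)
  · have hsum : ∑ i, (a (σ i) - b i) = ∑ i, a i - ∑ i, b i := by
      rw [← Equiv.sum_comp σ a]
      refine Nat.eq_sub_of_add_eq ?_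
      rw [← sum_add_distrib]
      exact sum_congr rfl fun i _ => Nat.sub_add_cancel (hσ i)
    rw [← hsum]
    exact ⟨(natDegree_prod_le _ _).trans (sum_le_sum fun i _ => (hP _ _).1),
      coeff_prod_sum_of_natDegree_le _ _ _ fun i _ => (hP _ _).1⟩
  · push Not at hσ
    obtain ⟨i, hi⟩ := hσ
    have hzero := (hP (σ i) i).2 hi
    rw [prod_eq_zero (f := fun j => P (σ j) j) (mem_univ i) hzero,
      prod_eq_zero (f := fun j => (P (σ j) j).coeff (a (σ j) - b j)) (mem_univ i)
        (by rw [hzero, coeff_zero])]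
    simp

theorem natDegree_det_le [DecidableEq m] (hP : P.IsGradedBy a b) :
    P.det.natDegree ≤ ∑ i, a i - ∑ i, b i := by
  rw [det_apply]
  exact natDegree_sum_le_of_forall_le _ _ fun σ _ =>
    (natDegree_smul_le _ _).trans (hP.prod_perm σ).1

theorem coeff_det [DecidableEq m] (hP : P.IsGradedBy a b) :
    P.det.coeff (∑ i, a i - ∑ i, b i) = (of fun i j => (P i j).coeff (a i - b j)).det := by
  simp only [det_apply, finsetSum_coeff, coeff_smul, (hP.prod_perm _).2, of_apply]

end Det

section Triangular

variable {n : ℕ} {P : Matrix (Fin n) (Fin n) R[X]}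

theorem map_C_mul {L : Matrix (Fin n) (Fin n) R} (hL : L.BlockTriangular OrderDual.toDual)
    (hP : P.IsGradedBy Fin.val Fin.val) : (L.map C * P).IsGradedBy Fin.val Fin.val := by
  intro i j
  simp only [mul_apply, map_apply]
  constructor
  · refine natDegree_sum_le_of_forall_le _ _ fun l _ => ?_
    rcases lt_or_ge i l with hil | hli
    · rw [hL hil, C_0, zero_mul, natDegree_zero]
      exact Nat.zero_le _
    · exact natDegree_C_mul_le _ _ |>.trans <| (hP l j).1.trans (by omega)
  · intro hij
    refine sum_eq_zero fun l _ => ?_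
    rcases lt_or_ge i l with hil | hli
    · rw [hL hil, C_0, zero_mul]
    · rw [(hP l j).2 (by omega), mul_zero]

theorem coeff_map_C_mul {L : Matrix (Fin n) (Fin n) R} (hL : L.BlockTriangular OrderDual.toDual)
    (hP : P.IsGradedBy Fin.val Fin.val) (i j : Fin n) :
    ((L.map C * P) i j).coeff (i - j) = L i i * (P i j).coeff (i - j) := by
  simp only [mul_apply, map_apply, finsetSum_coeff, coeff_C_mul]
  refine Fintype.sum_eq_single i fun l hl => ?_
  rcases lt_or_gt_of_ne hl with hli | hil
  · rcases lt_or_ge (l : ℕ) j with hlj | hjl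
    · rw [(hP l j).2 hlj, coeff_zero, mul_zero]
    · rw [coeff_eq_zero_of_natDegree_lt ((hP l j).1.trans_lt (by omega)), mul_zero]
  · rw [hL hil, zero_mul]

end Triangular

end Matrix.IsGradedBy

end GradedDegrees

section ExpCoeff

variable {K : Type*} [Field K] {a : ℕ → K}

def expCoeff (a : ℕ → K) (l j : ℕ) : K :=
  if j ≤ l then (∏ p ∈ Ico j l, a p) / (l - j)! else 0

theorem expCoeff_of_lt {l j : ℕ} (h : l < j) : expCoeff a l j = 0 :=
  if_neg (not_le.2 h)

theorem expCoeff_ne_zero [CharZero K] (ha : ∀ p, a p ≠ 0) {l j : ℕ} (h : j ≤ l) :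
    expCoeff a l j ≠ 0 := by
  rw [expCoeff, if_pos h]
  exact div_ne_zero (prod_ne_zero_iff.2 fun p _ => ha p)
    (Nat.cast_ne_zero.2 (Nat.factorial_ne_zero _))

noncomputable def expPolyMatrix {n : ℕ} (a : ℕ → K) : Matrix (Fin n) (Fin n) K[X] :=
  of fun l j => C (expCoeff a l j) * X ^ ((l : ℕ) - j)

theorem isGradedBy_expPolyMatrix {n : ℕ} :
    (expPolyMatrix (n := n) a).IsGradedBy Fin.val Fin.val := fun l j =>
  ⟨natDegree_C_mul_X_pow_le _ _, fun h => by
    rw [expPolyMatrix, of_apply, expCoeff_of_lt h, C_0, zero_mul]⟩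

theorem coeff_expPolyMatrix {n : ℕ} (l j : Fin n) :
    (expPolyMatrix a l j).coeff (l - j) = expCoeff a l j := by
  rw [expPolyMatrix, of_apply, coeff_C_mul_X_pow, if_pos rfl]

theorem Matrix.exp_smul_eq_map_eval_expPolyMatrix [CharZero K] [TopologicalSpace K]
    [IsTopologicalRing K] {n : ℕ} {N : Matrix (Fin n) (Fin n) K}
    (hN : ∀ i j : Fin n, N i j = if (i : ℕ) = j + 1 then a j else 0) (t : K) :
    NormedSpace.exp (t • N) = (expPolyMatrix a).map (eval t) := by
  ext l j
  rw [map_apply, expPolyMatrix, of_apply, eval_mul, eval_C, eval_pow, eval_X]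
  have hpow : (t • N) ^ n = 0 := by
    rw [_root_.smul_pow, pow_eq_zero_of_subdiagonal hN, smul_zero]
  rw [NormedSpace.exp_eq_sum_range_of_pow_eq_zero K hpow, Matrix.sum_apply]
  simp only [_root_.smul_pow, Matrix.smul_apply, pow_apply_of_subdiagonal hN, smul_eq_mul]
  by_cases hjl : (j : ℕ) ≤ l
  · rw [sum_eq_single_of_mem ((l : ℕ) - j) (mem_range.2 (by omega)) fun m _ hm => by
      rw [if_neg (by omega), mul_zero, mul_zero], if_pos (by omega), expCoeff, if_pos hjl]
    ring
  · rw [expCoeff_of_lt (not_le.1 hjl), zero_mul]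
    exact sum_eq_zero fun m _ => by rw [if_neg (by omega), mul_zero, mul_zero]

theorem expCoeff_eq_mul_descFactorial [CharZero K] (ha : ∀ p, a p ≠ 0) (l j : ℕ) :
    expCoeff a l j =
      (∏ p ∈ range l, a p) / l ! * (∏ p ∈ range j, a p)⁻¹ * l.descFactorial j := by
  by_cases hjl : j ≤ l
  · have hprod := prod_range_mul_prod_Ico a hjl
    have hfact : ((l - j)! : K) * l.descFactorial j = l ! := by
      exact_mod_cast Nat.factorial_mul_descFactorial hjl
    have hj : ∏ p ∈ range j, a p ≠ 0 := prod_ne_zero_iff.2 fun p _ => ha p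
    have hd : (l.descFactorial j : K) ≠ 0 := by
      exact_mod_cast (Nat.descFactorial_eq_zero_iff_lt.not.2 (not_lt.2 hjl))
    rw [expCoeff, if_pos hjl, ← hprod, ← hfact]
    field_simp
  · rw [expCoeff_of_lt (not_le.1 hjl), Nat.descFactorial_of_lt (not_le.1 hjl), Nat.cast_zero,
      mul_zero]

theorem det_expCoeff_ne_zero [CharZero K] (ha : ∀ p, a p ≠ 0) {k : ℕ} {x : Fin k → ℕ}
    (hx : Function.Injective x) : (of fun i j : Fin k => expCoeff a (x i) j).det ≠ 0 := by
  have hfactor : (of fun i j : Fin k => expCoeff a (x i) j) = of fun i j =>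
      (∏ p ∈ range (x i), a p) / (x i)! *
        of (fun i j : Fin k => (∏ p ∈ range j, a p)⁻¹ * (descPochhammer K j).eval (x i : K))
          i j := by
    ext i j
    simp only [of_apply, descPochhammer_eval_eq_descFactorial, expCoeff_eq_mul_descFactorial ha,
      mul_assoc]
  have hvandermonde : (vandermonde fun i => (x i : K)).det ≠ 0 :=
    det_vandermonde_ne_zero_iff.2 (Nat.cast_injective.comp hx)
  rw [det_eval_matrixOfPolynomials_eq_det_vandermonde _ _ (fun j => descPochhammer_natDegree K j)
    (fun j => monic_descPochhammer K j)] at hvandermonde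
  have hrows := det_mul_row (fun j : Fin k => (∏ p ∈ range j, a p)⁻¹)
    (of fun i j : Fin k => (descPochhammer K j).eval (x i : K))
  simp only [of_apply] at hrows
  rw [hfactor, det_mul_column, hrows]
  have hprod (l : ℕ) : ∏ p ∈ range l, a p ≠ 0 := prod_ne_zero_iff.2 fun p _ => ha p
  refine mul_ne_zero (prod_ne_zero_iff.2 fun i _ => ?_)
    (mul_ne_zero (prod_ne_zero_iff.2 fun j _ => inv_ne_zero (hprod j)) hvandermonde)
  exact div_ne_zero (hprod _) (Nat.cast_ne_zero.2 (Nat.factorial_ne_zero _))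

end ExpCoeff

theorem Matrix.IsGradedBy.degree_det_southwest {K : Type*} [Field K] [CharZero K] {n : ℕ}
    {P : Matrix (Fin n) (Fin n) K[X]} {a : ℕ → K} (hP : P.IsGradedBy Fin.val Fin.val)
    (ha : ∀ p, a p ≠ 0) (hcoeff : ∀ i j : Fin n, (P i j).coeff (i - j) = expCoeff a i j)
    (k : ℕ) (hk : k ≤ n) :
    (P.submatrix (fun i : Fin k => (⟨n - k + i, by omega⟩ : Fin n))
      (fun j : Fin k => (⟨j, by omega⟩ : Fin n))).det.degree = (k * (n - k) : ℕ) := by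
  set r : Fin k → Fin n := fun i => ⟨n - k + i, by omega⟩
  set c : Fin k → Fin n := fun j => ⟨j, by omega⟩
  have hQ := hP.submatrix r c
  have hsum : ∑ i, (Fin.val ∘ r) i - ∑ j, (Fin.val ∘ c) j = k * (n - k) := by
    simp [r, c, sum_add_distrib]
  have hlead : (of fun i j => (P.submatrix r c i j).coeff ((Fin.val ∘ r) i - (Fin.val ∘ c) j))
      = of fun i j : Fin k => expCoeff a (n - k + i) j := by
    ext i j
    exact hcoeff (r i) (c j)
  refine degree_eq_of_le_of_coeff_ne_zero
    (natDegree_le_iff_degree_le.1 (hsum ▸ hQ.natDegree_det_le)) ?_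
  rw [← hsum, hQ.coeff_det, hlead]
  exact det_expCoeff_ne_zero ha fun i i' h => Fin.ext (by simpa using h)

/-- for `Γ(t) = L_0 exp(t N_0)` with `N_0` having positive subdiagonal
entries and zeros elsewhere and `L_0 ∈ Lo_n^1`, the `(i,j)`-entry with `i > j` is a
polynomial in `t` of degree exactly `i-j`, and `m_k(t) = det(swminor(Γ(t),k))` is a
polynomial of degree exactly `k(n-k)`. -/
theorem polynomial_curve_degrees (L₀ N₀ : Matrix (Fin n) (Fin n) ℝ)
    (hL₀ : unitri n L₀)
    (hN₀ : ∀ i j : Fin n,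
      ((i : ℕ) = (j : ℕ) + 1 → 0 < N₀ i j) ∧ ((i : ℕ) ≠ (j : ℕ) + 1 → N₀ i j = 0)) :
    (∀ i j : Fin n, (j : ℕ) < (i : ℕ) →
      ∃ p : Polynomial ℝ, p.degree = ((i : ℕ) - (j : ℕ) : ℕ) ∧
        ∀ t : ℝ, (L₀ * NormedSpace.exp (t • N₀)) i j = p.eval t) ∧
    (∀ (k : ℕ) (hk1 : 1 ≤ k) (hk2 : k ≤ n - 1),
      ∃ q : Polynomial ℝ, q.degree = (k * (n - k) : ℕ) ∧
        ∀ t : ℝ,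
          (swminor n (L₀ * NormedSpace.exp (t • N₀)) k (by omega)).det = q.eval t) := by
  obtain ⟨a, ha, hN⟩ := exists_subdiagonal_ne_zero fun i j => ⟨((hN₀ i j).1 · |>.ne'), (hN₀ i j).2⟩
  have hL : L₀.BlockTriangular OrderDual.toDual := fun i j h => hL₀.2 i j h
  set P := L₀.map C * expPolyMatrix a
  have hP : P.IsGradedBy Fin.val Fin.val := isGradedBy_expPolyMatrix.map_C_mul hL
  have hcoeff (i j : Fin n) : (P i j).coeff (i - j) = expCoeff a i j :=
    (isGradedBy_expPolyMatrix.coeff_map_C_mul hL i j).trans <| by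
      rw [hL₀.1, one_mul, coeff_expPolyMatrix]
  have heval (t : ℝ) : P.map (evalRingHom t) = L₀ * NormedSpace.exp (t • N₀) := by
    rw [Matrix.map_mul, Matrix.map_map, exp_smul_eq_map_eval_expPolyMatrix hN, coe_evalRingHom,
      show eval t ∘ C = id from _root_.funext fun _ => eval_C, Matrix.map_id]
  refine ⟨fun i j hji => ⟨P i j, ?_, fun t => by rw [← heval]; rfl⟩,
    fun k _ hk => ⟨_, hP.degree_det_southwest ha hcoeff k (by omega), fun t => ?_⟩⟩
  · exact degree_eq_of_le_of_coeff_ne_zero (natDegree_le_iff_degree_le.1 (hP i j).1)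
      (hcoeff i j ▸ expCoeff_ne_zero ha hji.le)
  · rw [← coe_evalRingHom, RingHom.map_det, RingHom.mapMatrix_apply, ← submatrix_map, heval]
    rfl
end

section
/- If L_0 ∈ Lo_n^1 lies in the Bruhat cell Bru_{ρ_0} and ρ_0 ◁ ρ_1 = ρ_0 a_j is a Bruhat cover by an adjacent transposition a_j, then for any t ≠ 0 the matrix L_0 · λ_j(t) lies in the Bruhat cell Bru_{ρ_1}, where λ_j(t) = exp(t 𝔩_j). -/
open Matrix

variable (n : ℕ)

/-- Upper triangular. -/
def upTri (U : Matrix (Fin n) (Fin n) ℝ) : Prop :=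
  ∀ i j : Fin n, (j : ℕ) < (i : ℕ) → U i j = 0

/-- The permutation matrix of `ρ`: `e_i^⊤ P_ρ = e_{ρ(i)}^⊤`. -/
def Pmat (ρ : Equiv.Perm (Fin n)) : Matrix (Fin n) (Fin n) ℝ :=
  Matrix.of fun i j => if ρ i = j then 1 else 0

/-- The Bruhat cell `Bru_ρ ⊆ Lo_n^1`. -/
def Bru (ρ : Equiv.Perm (Fin n)) : Set (Matrix (Fin n) (Fin n) ℝ) :=
  {L | unitri n L ∧ ∃ U₁ U₂ : Matrix (Fin n) (Fin n) ℝ,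
    upTri n U₁ ∧ upTri n U₂ ∧ IsUnit U₁.det ∧ IsUnit U₂.det ∧
    L = U₁ * Pmat n ρ * U₂}

/-- Number of inversions of a permutation. -/
def invCount (σ : Equiv.Perm (Fin n)) : ℕ :=
  (Finset.univ.filter fun p : Fin n × Fin n => p.1 < p.2 ∧ σ p.2 < σ p.1).card

/-- The matrix `𝔩_j` with a single entry `1` in position `(j+1, j)`. -/
def lmat (j : Fin n) : Matrix (Fin n) (Fin n) ℝ :=
  Matrix.of fun a b => if (a : ℕ) = (j : ℕ) + 1 ∧ b = j then 1 else 0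

/-!
Write `B` for the invertible upper triangular matrices, so that `Bru_ρ` is the set of unit lower
triangular matrices in the double coset `B P_ρ B`, and let `s = a_j`. For `t ≠ 0`, the 2 × 2 identity
`[[1, 0], [t, 1]] = [[1, t⁻¹], [0, 1]] · [[0, -t⁻¹], [t, 0]] · [[1, t⁻¹], [0, 1]]` puts `λ_j(t)` in
`B P_s B`, so `L₀ λ_j(t) ∈ B P_{ρ₀} B P_s B`. Conjugating an element of `B` by `P_s` gives an upper
triangular matrix except for the entry `(j+1, j)`; clearing it by a transvection and moving that
transvection to the left of `P_{ρ₁}` turns it into the transvection at `(ρ₀⁻¹ j, ρ₀⁻¹ (j+1))`, which is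
upper triangular exactly when `ρ₀⁻¹ j < ρ₀⁻¹ (j+1)`, i.e. when `ρ₁` has one more inversion than `ρ₀`.
-/

open Equiv

theorem CovBy.swap_lt_swap_iff {α : Type*} [LinearOrder α] [DecidableEq α] {a b : α} (hab : a ⋖ b)
    {x y : α} :
    swap a b x < swap a b y ↔ (x < y ∧ ¬(x = a ∧ y = b)) ∨ (x = b ∧ y = a) := by
  have hge : ∀ z, a < z → b ≤ z := fun z hz => not_lt.1 fun h => hab.2 hz h
  have hle : ∀ z, z < b → z ≤ a := fun z hz => not_lt.1 fun h => hab.2 h hz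
  have := hab.lt
  rw [swap_apply_def, swap_apply_def]
  split_ifs <;> grind

theorem invCount_swap_mul {n : ℕ} {σ : Perm (Fin n)} {p q : Fin n} (hσ : σ p ⋖ σ q)
    (hpq : p < q) : invCount n (swap (σ p) (σ q) * σ) = invCount n σ + 1 := by
  have hnot : (p, q) ∉ Finset.univ.filter fun x : Fin n × Fin n => x.1 < x.2 ∧ σ x.2 < σ x.1 := by
    simp [hσ.lt.not_gt]
  rw [invCount, invCount, ← Finset.card_insert_of_notMem hnot]
  congr 1
  ext ⟨x, y⟩
  simp only [Finset.mem_filter, Finset.mem_univ, true_and, Finset.mem_insert, Prod.mk.injEq,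
    Perm.mul_apply, hσ.swap_lt_swap_iff, σ.injective.eq_iff]
  grind

theorem inv_lt_inv_of_invCount_swap_mul {n : ℕ} {ρ : Perm (Fin n)} {a b : Fin n} (hab : a ⋖ b)
    (hcov : invCount n (swap a b * ρ) = invCount n ρ + 1) : ρ⁻¹ a < ρ⁻¹ b := by
  refine lt_of_le_of_ne (not_lt.1 fun hlt => ?_) (by simpa using hab.ne)
  set σ := swap a b * ρ
  have hσa : σ (ρ⁻¹ b) = a := by simp [σ]
  have hσb : σ (ρ⁻¹ a) = b := by simp [σ]
  have key := invCount_swap_mul (σ := σ) (by rwa [hσa, hσb]) hlt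
  rw [hσa, hσb, ← mul_assoc, Equiv.swap_mul_self, one_mul] at key
  omega

namespace Matrix

section Permutation

variable {K m : Type*} [Field K] [DecidableEq m]

theorem transvection_submatrix (σ : Perm m) (i j : m) (c : K) :
    (transvection i j c).submatrix σ σ = transvection (σ⁻¹ i) (σ⁻¹ j) c := by
  simp [transvection, submatrix_add, submatrix_one_equiv]

variable [Fintype m]

theorem permMatrix_mul_mul_permMatrix_inv (σ : Perm m) (M : Matrix m m K) :
    σ.permMatrix K * M * σ⁻¹.permMatrix K = M.submatrix σ σ := by
  rw [PEquiv.toMatrix_toPEquiv_mul, PEquiv.mul_toMatrix_toPEquiv, submatrix_submatrix]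
  rfl

theorem permMatrix_mul_transvection (σ : Perm m) (i j : m) (c : K) :
    σ.permMatrix K * transvection i j c = transvection (σ⁻¹ i) (σ⁻¹ j) c * σ.permMatrix K := by
  rw [← transvection_submatrix, ← permMatrix_mul_mul_permMatrix_inv,
    Matrix.mul_assoc _ _ (σ.permMatrix K), ← permMatrix_mul, mul_inv_cancel, permMatrix_one,
    Matrix.mul_one]

theorem transvection_eq_mul_diagonal_mul_permMatrix_swap_mul {a b : m} (hab : a ≠ b) {t : K}
    (ht : t ≠ 0) :
    transvection b a t = transvection a b t⁻¹ *
      (diagonal (fun i => if i = a then -t⁻¹ else if i = b then t else 1) *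
        (Equiv.swap a b).permMatrix K) * transvection a b t⁻¹ := by
  rw [PEquiv.mul_toMatrix_toPEquiv, Equiv.symm_swap]
  ext x y
  rw [transvection, add_apply]
  obtain hx | hx | ⟨hxa, hxb⟩ : x = a ∨ x = b ∨ (x ≠ a ∧ x ≠ b) := by tauto
  all_goals obtain hy | hy | ⟨hya, hyb⟩ : y = a ∨ y = b ∨ (y ≠ a ∧ y ≠ b) := by tauto
  all_goals simp [hab.symm, mul_transvection_apply_of_ne, transvection_mul_apply_of_ne,
    one_apply, single_apply, diagonal_apply, swap_apply_of_ne_of_ne, *]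
  all_goals grind

end Permutation

section Bruhat

variable (K m : Type*) [Field K] [Fintype m] [DecidableEq m] [LinearOrder m]

def borelSubmonoid : Submonoid (Matrix m m K) where
  carrier := {U | U.IsUpperTriangular ∧ IsUnit U.det}
  mul_mem' hU hV := ⟨hU.1.mul hV.1, by rw [det_mul]; exact hU.2.mul hV.2⟩
  one_mem' := ⟨blockTriangular_one, by simp⟩

def bruhatCell (σ : Perm m) : Set (Matrix m m K) :=
  {M | ∃ U₁ ∈ borelSubmonoid K m, ∃ U₂ ∈ borelSubmonoid K m, M = U₁ * σ.permMatrix K * U₂}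

variable {K m}

theorem mem_borelSubmonoid_iff {U : Matrix m m K} :
    U ∈ borelSubmonoid K m ↔ U.IsUpperTriangular ∧ ∀ i, U i i ≠ 0 := by
  refine and_congr_right fun hU => ?_
  rw [det_of_isUpperTriangular hU, isUnit_iff_ne_zero, Finset.prod_ne_zero_iff]
  simp

theorem transvection_mem_borelSubmonoid {i j : m} (hij : i < j) (c : K) :
    transvection i j c ∈ borelSubmonoid K m :=
  ⟨blockTriangular_transvection hij.le c, by simp [hij.ne]⟩

theorem diagonal_mem_borelSubmonoid {d : m → K} (hd : ∀ i, d i ≠ 0) :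
    diagonal d ∈ borelSubmonoid K m :=
  mem_borelSubmonoid_iff.2 ⟨blockTriangular_diagonal d, by simpa using hd⟩

theorem mul_mem_bruhatCell {σ : Perm m} {U M : Matrix m m K} (hU : U ∈ borelSubmonoid K m)
    (hM : M ∈ bruhatCell K m σ) : U * M ∈ bruhatCell K m σ := by
  obtain ⟨U₁, hU₁, U₂, hU₂, rfl⟩ := hM
  exact ⟨U * U₁, mul_mem hU hU₁, U₂, hU₂, by simp only [Matrix.mul_assoc]⟩

theorem mem_bruhatCell_mul {σ : Perm m} {U M : Matrix m m K} (hU : U ∈ borelSubmonoid K m)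
    (hM : M ∈ bruhatCell K m σ) : M * U ∈ bruhatCell K m σ := by
  obtain ⟨U₁, hU₁, U₂, hU₂, rfl⟩ := hM
  exact ⟨U₁, hU₁, U₂ * U, mul_mem hU₂ hU, by simp only [Matrix.mul_assoc]⟩

theorem transvection_mem_bruhatCell_swap {a b : m} (hab : a < b) {t : K} (ht : t ≠ 0) :
    transvection b a t ∈ bruhatCell K m (Equiv.swap a b) := by
  set d : m → K := fun i => if i = a then -t⁻¹ else if i = b then t else 1
  have hd : ∀ i, d i ≠ 0 := fun i => by dsimp only [d]; split_ifs <;> simp [ht]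
  refine ⟨transvection a b t⁻¹ * diagonal d, mul_mem (transvection_mem_borelSubmonoid hab _)
    (diagonal_mem_borelSubmonoid hd), transvection a b t⁻¹, transvection_mem_borelSubmonoid hab _, ?_⟩
  rw [transvection_eq_mul_diagonal_mul_permMatrix_swap_mul hab.ne ht,
    Matrix.mul_assoc _ (diagonal d)]

theorem exists_submatrix_swap_eq_transvection_mul {U : Matrix m m K}
    (hU : U ∈ borelSubmonoid K m) {a b : m} (hab : a ⋖ b) :
    ∃ c : K, ∃ T ∈ borelSubmonoid K m,
      U.submatrix (Equiv.swap a b) (Equiv.swap a b) = transvection b a c * T := by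
  obtain ⟨hUup, hUdiag⟩ := mem_borelSubmonoid_iff.1 hU
  set s := Equiv.swap a b
  set c := U a b / U b b
  have hc : c * U b b = U a b := div_mul_cancel₀ _ (hUdiag b)
  refine ⟨c, transvection b a (-c) * U.submatrix s s,
    mem_borelSubmonoid_iff.2 ⟨fun x y (hyx : y < x) => ?_, fun x => ?_⟩, ?_⟩
  · by_cases hxb : x = b
    · rw [hxb] at hyx ⊢
      rw [transvection_mul_apply_same]
      simp only [submatrix_apply, s, swap_apply_left, swap_apply_right]
      rcases (hab.le_of_lt hyx).lt_or_eq with hya | rfl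
      · rw [swap_apply_of_ne_of_ne hya.ne hyx.ne, hUup hya, hUup hyx]
        ring
      · rw [swap_apply_left, neg_mul, hc, add_neg_cancel]
    · rw [transvection_mul_apply_of_ne _ _ _ _ hxb, submatrix_apply]
      exact hUup (hab.swap_lt_swap_iff.2 (Or.inl ⟨hyx, fun h => hxb h.2⟩))
  · by_cases hxb : x = b
    · rw [hxb]
      simpa [s, hUup hab.lt] using hUdiag a
    · simpa [transvection_mul_apply_of_ne _ _ _ _ hxb] using hUdiag (s x)
  · rw [← Matrix.mul_assoc, transvection_mul_transvection_same _ _ hab.ne', add_neg_cancel,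
      transvection_zero, Matrix.one_mul]

theorem mul_mem_bruhatCell_swap {ρ : Perm m} {a b : m} (hab : a ⋖ b) (hρ : ρ⁻¹ a < ρ⁻¹ b)
    {M N : Matrix m m K} (hM : M ∈ bruhatCell K m ρ)
    (hN : N ∈ bruhatCell K m (Equiv.swap a b)) :
    M * N ∈ bruhatCell K m (Equiv.swap a b * ρ) := by
  obtain ⟨U₁, hU₁, U₂, hU₂, rfl⟩ := hM
  obtain ⟨V₁, hV₁, V₂, hV₂, rfl⟩ := hN
  set s := Equiv.swap a b
  obtain ⟨c, T, hT, hconj⟩ := exists_submatrix_swap_eq_transvection_mul (mul_mem hU₂ hV₁) hab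
  have hs : s⁻¹ = s := Equiv.swap_inv a b
  have hss : s.permMatrix K * s.permMatrix K = 1 := by
    rw [← permMatrix_mul, Equiv.swap_mul_self, permMatrix_one]
  have key : ρ.permMatrix K * (U₂ * V₁) * s.permMatrix K =
      transvection (ρ⁻¹ a) (ρ⁻¹ b) c * (s * ρ).permMatrix K * T :=
    calc ρ.permMatrix K * (U₂ * V₁) * s.permMatrix K
        = (s * ρ).permMatrix K * (s.permMatrix K * (U₂ * V₁) * s⁻¹.permMatrix K) := by
          rw [permMatrix_mul, hs]
          simp only [← Matrix.mul_assoc]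
          rw [Matrix.mul_assoc (ρ.permMatrix K) (s.permMatrix K), hss, Matrix.mul_one]
      _ = transvection (ρ⁻¹ a) (ρ⁻¹ b) c * (s * ρ).permMatrix K * T := by
          rw [permMatrix_mul_mul_permMatrix_inv, hconj, ← Matrix.mul_assoc,
            permMatrix_mul_transvection]
          simp [s, hs]
  have hmem : ρ.permMatrix K * (U₂ * V₁) * s.permMatrix K ∈ bruhatCell K m (s * ρ) :=
    key ▸ ⟨_, transvection_mem_borelSubmonoid hρ c, T, hT, rfl⟩
  simpa only [Matrix.mul_assoc] using mem_bruhatCell_mul hV₂ (mul_mem_bruhatCell hU₁ hmem)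

end Bruhat

end Matrix

theorem unitri_mul {n : ℕ} {A B : Matrix (Fin n) (Fin n) ℝ} (hA : unitri n A) (hB : unitri n B) :
    unitri n (A * B) := by
  have hlower : (A * B).IsLowerTriangular :=
    BlockTriangular.mul (fun i j h => hA.2 i j h) (fun i j h => hB.2 i j h)
  refine ⟨fun i => ?_, fun i j h => hlower h⟩
  rw [mul_apply, Finset.sum_eq_single i, hA.1, hB.1, one_mul]
  · intro k _ hki
    rcases hki.lt_or_gt with h | h
    · rw [hB.2 k i h, mul_zero]
    · rw [hA.2 i k h, zero_mul]
  · simp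

theorem unitri_transvection {n : ℕ} {i j : Fin n} (hji : j < i) (c : ℝ) :
    unitri n (transvection i j c) := by
  refine ⟨fun k => ?_, fun k l h => blockTriangular_transvection (b := OrderDual.toDual) hji.le c h⟩
  simp only [transvection, Matrix.add_apply, one_apply_eq, single_apply, add_eq_left,
    ite_eq_right_iff]
  rintro ⟨rfl, rfl⟩
  exact absurd hji (lt_irrefl _)

theorem one_add_smul_lmat {n : ℕ} {j : Fin n} (hj : (j : ℕ) + 1 < n) (t : ℝ) :
    1 + t • lmat n j = transvection ⟨j + 1, hj⟩ j t := by
  ext a b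
  simp [transvection, lmat, single_apply, Fin.ext_iff, eq_comm]

theorem Pmat_eq_permMatrix {n : ℕ} (ρ : Equiv.Perm (Fin n)) : Pmat n ρ = ρ.permMatrix ℝ := by
  ext i j
  simp [Pmat, PEquiv.toMatrix_apply]

theorem mem_Bru_iff {n : ℕ} {ρ : Equiv.Perm (Fin n)} {L : Matrix (Fin n) (Fin n) ℝ} :
    L ∈ Bru n ρ ↔ unitri n L ∧ L ∈ bruhatCell ℝ (Fin n) ρ := by
  rw [Bru, Set.mem_ofPred_eq, Pmat_eq_permMatrix]
  exact and_congr_right fun _ =>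
    ⟨fun ⟨U₁, U₂, h₁, h₂, d₁, d₂, e⟩ => ⟨U₁, ⟨h₁, d₁⟩, U₂, ⟨h₂, d₂⟩, e⟩,
      fun ⟨U₁, ⟨h₁, d₁⟩, U₂, ⟨h₂, d₂⟩, e⟩ => ⟨U₁, U₂, h₁, h₂, d₁, d₂, e⟩⟩

/-- if `L_0 ∈ Bru_{ρ_0}` and `ρ_0 ◁ ρ_1 = ρ_0 a_j` is a Bruhat cover
(`a_j` acting on values; one more inversion), then for all `t ≠ 0`,
`L_0 λ_j(t) ∈ Bru_{ρ_1}`, where `λ_j(t) = id + t 𝔩_j`. -/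
theorem bruhat_cell_step (j : Fin n) (hj : (j : ℕ) + 1 < n)
    (ρ₀ ρ₁ : Equiv.Perm (Fin n))
    (h₁ : ρ₁ = Equiv.swap j ⟨(j : ℕ) + 1, hj⟩ * ρ₀)
    (hcov : invCount n ρ₁ = invCount n ρ₀ + 1)
    (L₀ : Matrix (Fin n) (Fin n) ℝ) (hL₀ : L₀ ∈ Bru n ρ₀)
    (t : ℝ) (ht : t ≠ 0) :
    L₀ * ((1 : Matrix (Fin n) (Fin n) ℝ) + t • lmat n j) ∈ Bru n ρ₁ := by
  have hcovBy : j ⋖ ⟨(j : ℕ) + 1, hj⟩ := Fin.covBy_iff.2 (Nat.covBy_iff_add_one_eq.2 rfl)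
  subst h₁
  rw [mem_Bru_iff] at hL₀ ⊢
  rw [one_add_smul_lmat hj]
  exact ⟨unitri_mul hL₀.1 (unitri_transvection hcovBy.lt t),
    mul_mem_bruhatCell_swap hcovBy (inv_lt_inv_of_invCount_swap_mul hcovBy hcov) hL₀.2
      (transvection_mem_bruhatCell_swap hcovBy.lt ht)⟩
end

section
/- Let n ≥ 2 and consider admissible cyclic words of length 2n. The totally positive word w_+ = (1,2,…,n,1',2',…,n') has rank 0, the totally negative word w_- has rank 2(n-2), every other admissible word w ∈ 𝔚⁺ satisfies 0 < rk(w) < 2(n-2), and m_{\{1,2\}}(w) > 0 if and only if rk(w) is even. -/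
/-- Position of the (0-based) label `i % n` in the admissible cyclic word `w`. -/
def posOf (n : ℕ) (hn : 0 < n) (w : ZMod (2 * n) ≃ Fin n × Bool) (i : ℕ) :
    ZMod (2 * n) :=
  w.symm ((⟨i % n, Nat.mod_lt i hn⟩ : Fin n), false)

/-- The counterclockwise distance (in positions, an element of `[0, 2n)`) from the
label `k` to the label `k+1`. -/
def arcδ (n : ℕ) (hn : 0 < n) (w : ZMod (2 * n) ≃ Fin n × Bool) (k : ℕ) : ℕ :=
  (posOf n hn w (k + 1) - posOf n hn w k).val

/-- Fold over the arcs `0, 1, …, k` between consecutive labels, producing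
`(s, c, T)`: the number `s` of maximal monotone subsequences so far, the accumulated
content `c` of the already-completed maximal monotone runs (in complete half-turns,
i.e. `n` position-units each), and the length `T` (in position-units) of the current
run.  `dir k` is the direction of arc `k` and `θ k` its length in position-units. -/
def rkAux (n : ℕ) (dir : ℕ → Bool) (θ : ℕ → ℕ) : ℕ → ℕ × ℕ × ℕ
  | 0 => (1, 0, θ 0)
  | k + 1 =>
    let r := rkAux n dir θ k
    if dir (k + 1) = dir k then (r.1, r.2.1, r.2.2 + θ (k + 1))
    else (r.1 + 1, r.2.1 + r.2.2 / n, θ (k + 1))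

/-- The rank `rk(w) = 2·Cont(w) + s − 1` of an admissible cyclic word `w`, where `s` is
the number of maximal monotone subsequences of the labels `1,…,n` and `Cont(w)` the
total number of complete half-turns of the corresponding immersed monotone arcs. -/
def rk (n : ℕ) (hn : 0 < n) (w : ZMod (2 * n) ≃ Fin n × Bool) : ℕ :=
  let dir : ℕ → Bool := fun k => decide (arcδ n hn w k < n)
  let θ : ℕ → ℕ := fun k => if arcδ n hn w k < n then arcδ n hn w k else 2 * n - arcδ n hn w k
  let r := rkAux n dir θ (n - 2)
  2 * (r.2.1 + r.2.2 / n) + r.1 - 1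

/-- `w` is (a rotation of) the totally positive word `(1,2,…,n,1',…,n')`. -/
def isPosWord (n : ℕ) (w : ZMod (2 * n) ≃ Fin n × Bool) : Prop :=
  ∃ r : ZMod (2 * n), ∀ i : Fin n, w.symm (i, false) = r + ((i : ℕ) : ZMod (2 * n))

/-- `w` is (a rotation of) the totally negative word (obtained from the totally
positive one by interchanging every even entry with its opposite and reading
backwards); its label `i` sits `(n-1)·i` positions counterclockwise of label `0`. -/
def isNegWord (n : ℕ) (w : ZMod (2 * n) ≃ Fin n × Bool) : Prop :=
  ∃ r : ZMod (2 * n), ∀ i : Fin n, w.symm (i, false) = r + (((n - 1) * (i : ℕ) : ℕ) : ZMod (2 * n))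

/-!
Write `rk(w) + 1 = 2·Cont(w) + s` and read the `n - 1` arcs between consecutive labels one at a
time. Admissibility makes every arc strictly shorter than a half-turn (length `0` or `n` would put
two labels, or a label and an opposite, at the same position). So an arc continuing the current
monotone run raises `2·Cont` by at most `2`, while an arc reversing direction raises `s` by
exactly `1`; hence `rk(w) ≤ 2(n - 2)`, and `s` is odd exactly when the first and the last arc turn
the same way, which is the parity statement since for `w ∈ 𝔚⁺` the last arc is counterclockwise.

Both extreme ranks force a single counterclockwise run, and then `rk(w) = 2⌊Σ/n⌋` for the total
length `Σ` of the arcs. Rank `0` means `Σ < n`, so all arcs have length `1`: `w = w₊`. Rank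
`2(n - 2)` means `n(n - 2) ≤ Σ ≤ (n - 1)²`; but `n ∣ Σ` would put label `n` on label `1` or on
`1'`, so `Σ = (n - 1)²` and all arcs have length `n - 1`: `w = w₋`.
-/

open Finset

def Admissible (n : ℕ) (w : ZMod (2 * n) ≃ Fin n × Bool) : Prop :=
  ∀ ℓ : Fin n, w.symm (ℓ, true) = w.symm (ℓ, false) + (n : ZMod (2 * n))

theorem ZMod.natCast_eq_zero_or_eq_of_dvd {n a : ℕ} (h : n ∣ a) :
    (a : ZMod (2 * n)) = 0 ∨ (a : ZMod (2 * n)) = n := by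
  obtain ⟨q, rfl⟩ := h
  obtain ⟨e, rfl | rfl⟩ := Nat.even_or_odd' q
  · left
    rw [show n * (2 * e) = 2 * n * e by ring, Nat.cast_mul, ZMod.natCast_self, zero_mul]
  · right
    rw [show n * (2 * e + 1) = 2 * n * e + n by ring, Nat.cast_add, Nat.cast_mul,
      ZMod.natCast_self, zero_mul, zero_add]

namespace rkAux

variable {n : ℕ} {dir : ℕ → Bool} {θ : ℕ → ℕ} {k : ℕ}

theorem fst_pos (k : ℕ) : 0 < (rkAux n dir θ k).1 := by
  induction k with
  | zero => exact Nat.one_pos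
  | succ k ih => simp only [rkAux]; split <;> omega

theorem forall_dir_eq_of_fst_eq_one (h : (rkAux n dir θ k).1 = 1) :
    ∀ j ≤ k, dir j = dir 0 := by
  induction k with
  | zero => intro j hj; rw [Nat.le_zero.1 hj]
  | succ k ih =>
    by_cases hd : dir (k + 1) = dir k
    · simp only [rkAux, hd, if_true] at h
      intro j hj
      rcases Nat.lt_or_eq_of_le hj with hj | rfl
      · exact ih h j (by omega)
      · rw [hd]; exact ih h k le_rfl
    · simp only [rkAux, hd, if_false] at h
      have := fst_pos (n := n) (dir := dir) (θ := θ) k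
      omega

theorem odd_fst_iff (k : ℕ) : Odd (rkAux n dir θ k).1 ↔ dir k = dir 0 := by
  induction k with
  | zero => simp [rkAux]
  | succ k ih =>
    by_cases hd : dir (k + 1) = dir k
    · simpa only [rkAux, hd, if_true] using ih
    · simp only [rkAux, hd, if_false, Nat.odd_add_one, ih]
      revert hd
      cases dir 0 <;> cases dir k <;> cases dir (k + 1) <;> decide

theorem eq_of_forall_dir_eq (h : ∀ j ≤ k, dir j = dir 0) :
    rkAux n dir θ k = (1, 0, ∑ j ∈ range (k + 1), θ j) := by
  induction k with
  | zero => simp [rkAux]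
  | succ k ih =>
    have hd : dir (k + 1) = dir k := (h _ le_rfl).trans (h k k.le_succ).symm
    simp only [rkAux, hd, if_true, ih fun j hj => h j (hj.trans k.le_succ),
      sum_range_succ (n := k + 1)]

/-- `2·Cont + s` after reading the arcs `0, …, k`. -/
def weight (n : ℕ) (dir : ℕ → Bool) (θ : ℕ → ℕ) (k : ℕ) : ℕ :=
  2 * ((rkAux n dir θ k).2.1 + (rkAux n dir θ k).2.2 / n) + (rkAux n dir θ k).1

theorem weight_succ_le_of_dir_eq (hd : dir (k + 1) = dir k) (hθ : θ (k + 1) < n) :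
    weight n dir θ (k + 1) ≤ weight n dir θ k + 2 := by
  have hdiv : ((rkAux n dir θ k).2.2 + θ (k + 1)) / n ≤ (rkAux n dir θ k).2.2 / n + 1 :=
    calc _ ≤ ((rkAux n dir θ k).2.2 + n) / n := Nat.div_le_div_right (by omega)
      _ = _ := Nat.add_div_right _ (by omega)
  simp only [weight, rkAux, hd, if_true]
  omega

theorem weight_succ_of_dir_ne (hd : dir (k + 1) ≠ dir k) (hθ : θ (k + 1) < n) :
    weight n dir θ (k + 1) = weight n dir θ k + 1 := by
  simp only [weight, rkAux, hd, if_false, Nat.div_eq_of_lt hθ]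
  omega

theorem weight_le (h : ∀ j ≤ k, θ j < n) : weight n dir θ k ≤ 2 * k + 1 := by
  induction k with
  | zero => simp [weight, rkAux, Nat.div_eq_of_lt (h 0 le_rfl)]
  | succ k ih =>
    have ih := ih fun j hj => h j (hj.trans k.le_succ)
    by_cases hd : dir (k + 1) = dir k
    · have := weight_succ_le_of_dir_eq hd (h _ le_rfl); omega
    · have := weight_succ_of_dir_ne hd (h _ le_rfl); omega

theorem forall_dir_eq_of_weight_eq (h : ∀ j ≤ k, θ j < n)
    (hw : weight n dir θ k = 2 * k + 1) :
    ∀ j ≤ k, dir j = dir 0 := by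
  induction k with
  | zero => intro j hj; rw [Nat.le_zero.1 hj]
  | succ k ih =>
    have h' : ∀ j ≤ k, θ j < n := fun j hj => h j (hj.trans k.le_succ)
    have hk := weight_le (dir := dir) h'
    by_cases hd : dir (k + 1) = dir k
    · have ih := ih h' (by have := weight_succ_le_of_dir_eq hd (h _ le_rfl); omega)
      intro j hj
      rcases Nat.lt_or_eq_of_le hj with hj | rfl
      · exact ih j (by omega)
      · rw [hd]; exact ih k le_rfl
    · have := weight_succ_of_dir_ne hd (h _ le_rfl); omega

end rkAux

section Labels

variable {n : ℕ} (hn : 0 < n) (w : ZMod (2 * n) ≃ Fin n × Bool)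

theorem posOf_succ (k : ℕ) :
    posOf n hn w (k + 1) = posOf n hn w k + (arcδ n hn w k : ZMod (2 * n)) := by
  have : NeZero (2 * n) := ⟨by omega⟩
  rw [arcδ, ZMod.natCast_zmod_val]
  ring

theorem posOf_add_sum (i m : ℕ) :
    posOf n hn w (i + m) =
      posOf n hn w i + ((∑ k ∈ range m, arcδ n hn w (i + k) : ℕ) : ZMod (2 * n)) := by
  induction m with
  | zero => simp
  | succ m ih =>
    rw [← add_assoc, posOf_succ, ih, sum_range_succ]
    push_cast
    ring

theorem posOf_val (i : Fin n) : posOf n hn w i = w.symm (i, false) := by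
  simp only [posOf, Nat.mod_eq_of_lt i.isLt]

theorem mod_eq_mod_of_posOf_eq {i j : ℕ} (h : posOf n hn w i = posOf n hn w j) :
    i % n = j % n := by
  simpa using congrArg (fun x => (x.1 : ℕ)) (w.symm.injective h)

theorem posOf_ne_add (hadm : Admissible n w) (i j : ℕ) :
    posOf n hn w i ≠ posOf n hn w j + (n : ZMod (2 * n)) := by
  rw [posOf, posOf, ← hadm]
  exact fun h => Bool.false_ne_true (congrArg Prod.snd (w.symm.injective h))

theorem not_dvd_sum_arcδ (hadm : Admissible n w) {i m : ℕ} (hm : 0 < m) (him : i + m < n) :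
    ¬ n ∣ ∑ k ∈ range m, arcδ n hn w (i + k) := by
  intro hdvd
  have hpos := posOf_add_sum hn w i m
  rcases ZMod.natCast_eq_zero_or_eq_of_dvd hdvd with h | h <;> rw [h] at hpos
  · have := mod_eq_mod_of_posOf_eq hn w (hpos.trans (add_zero _))
    rw [Nat.mod_eq_of_lt him, Nat.mod_eq_of_lt (by omega)] at this
    omega
  · exact posOf_ne_add hn w hadm _ _ hpos

theorem arcδ_lt (k : ℕ) : arcδ n hn w k < 2 * n :=
  have : NeZero (2 * n) := ⟨by omega⟩
  ZMod.val_lt _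

theorem not_dvd_arcδ (hadm : Admissible n w) {k : ℕ} (hk : k + 1 < n) :
    ¬ n ∣ arcδ n hn w k := by
  simpa using not_dvd_sum_arcδ hn w hadm one_pos hk

theorem exists_symm_eq_add_mul_iff {c : ℕ} (hc : c < 2 * n) :
    (∃ r : ZMod (2 * n), ∀ i : Fin n,
        w.symm (i, false) = r + ((c * i : ℕ) : ZMod (2 * n))) ↔
      ∀ k, k + 1 < n → arcδ n hn w k = c := by
  constructor
  · rintro ⟨r, hr⟩ k hk
    have hpos : ∀ m < n, posOf n hn w m = r + ((c * m : ℕ) : ZMod (2 * n)) := fun m hm =>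
      (posOf_val hn w ⟨m, hm⟩).trans (hr ⟨m, hm⟩)
    rw [arcδ, hpos _ hk, hpos k (by omega), mul_add_one, Nat.cast_add, add_sub_add_left_eq_sub,
      add_sub_cancel_left, ZMod.val_natCast_of_lt hc]
  · intro h
    refine ⟨posOf n hn w 0, fun i => ?_⟩
    rw [← posOf_val hn, ← zero_add (i : ℕ), posOf_add_sum, zero_add,
      sum_congr rfl fun k hk => h _ (by have := mem_range.1 hk; omega)]
    simp [mul_comm]

theorem isPosWord_iff : isPosWord n w ↔ ∀ k, k + 1 < n → arcδ n hn w k = 1 := by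
  simpa only [isPosWord, one_mul] using exists_symm_eq_add_mul_iff hn w (c := 1) (by omega)

theorem isNegWord_iff : isNegWord n w ↔ ∀ k, k + 1 < n → arcδ n hn w k = n - 1 :=
  exists_symm_eq_add_mul_iff hn w (by omega)

def arcDir (n : ℕ) (hn : 0 < n) (w : ZMod (2 * n) ≃ Fin n × Bool) (k : ℕ) : Bool :=
  decide (arcδ n hn w k < n)

def arcLen (n : ℕ) (hn : 0 < n) (w : ZMod (2 * n) ≃ Fin n × Bool) (k : ℕ) : ℕ :=
  if arcδ n hn w k < n then arcδ n hn w k else 2 * n - arcδ n hn w k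

theorem rk_eq_weight_sub_one :
    rk n hn w = rkAux.weight n (arcDir n hn w) (arcLen n hn w) (n - 2) - 1 :=
  rfl

theorem rk_add_one : rk n hn w + 1 = rkAux.weight n (arcDir n hn w) (arcLen n hn w) (n - 2) := by
  have := rkAux.fst_pos (n := n) (dir := arcDir n hn w) (θ := arcLen n hn w) (n - 2)
  rw [rk_eq_weight_sub_one, rkAux.weight]
  omega

theorem arcLen_lt (hadm : Admissible n w) {k : ℕ} (hk : k + 1 < n) : arcLen n hn w k < n := by
  have hndvd := not_dvd_arcδ hn w hadm hk
  have hne0 : arcδ n hn w k ≠ 0 := fun h => hndvd (by rw [h]; exact dvd_zero n)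
  have hne : arcδ n hn w k ≠ n := fun h => hndvd (by rw [h])
  have := arcδ_lt hn w k
  unfold arcLen
  split <;> omega

theorem rk_le (hn2 : 2 ≤ n) (hadm : Admissible n w) : rk n hn w ≤ 2 * (n - 2) := by
  have := rkAux.weight_le (dir := arcDir n hn w) fun j (hj : j ≤ n - 2) =>
    arcLen_lt hn w hadm (k := j) (by omega)
  have := rk_add_one hn w
  omega

theorem even_rk_iff (hlast : arcδ n hn w (n - 2) < n) :
    Even (rk n hn w) ↔ arcδ n hn w 0 < n := by
  have hodd := rkAux.odd_fst_iff (n := n) (dir := arcDir n hn w) (θ := arcLen n hn w) (n - 2)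
  have hpos := rkAux.fst_pos (n := n) (dir := arcDir n hn w) (θ := arcLen n hn w) (n - 2)
  have hrk : Even (rk n hn w) ↔ Odd (rkAux n (arcDir n hn w) (arcLen n hn w) (n - 2)).1 := by
    rw [Nat.even_iff, Nat.odd_iff, rk_eq_weight_sub_one, rkAux.weight]
    omega
  rw [hrk, hodd, arcDir, arcDir, decide_eq_true hlast, eq_comm, decide_eq_true_iff]

theorem forall_arcδ_lt_of_forall_arcDir_eq (hlast : arcδ n hn w (n - 2) < n)
    (h : ∀ j ≤ n - 2, arcDir n hn w j = arcDir n hn w 0) :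
    ∀ k, k + 1 < n → arcδ n hn w k < n := by
  intro k hk
  have := (h k (by omega)).trans (h (n - 2) le_rfl).symm
  rwa [arcDir, arcDir, decide_eq_true hlast, decide_eq_true_iff] at this

theorem rk_eq_of_forall_arcδ_lt (hn2 : 2 ≤ n) (h : ∀ k, k + 1 < n → arcδ n hn w k < n) :
    rk n hn w = 2 * ((∑ k ∈ range (n - 1), arcδ n hn w k) / n) := by
  have hdir : ∀ j ≤ n - 2, arcDir n hn w j = arcDir n hn w 0 := fun j hj => by
    rw [arcDir, arcDir, decide_eq_true (h j (by omega)), decide_eq_true (h 0 (by omega))]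
  have hlen : ∀ j ∈ range (n - 2 + 1), arcLen n hn w j = arcδ n hn w j := fun j hj =>
    if_pos (h j (by have := mem_range.1 hj; omega))
  have := rk_add_one hn w
  rw [rkAux.weight, rkAux.eq_of_forall_dir_eq hdir,
    sum_congr (g := fun j => arcδ n hn w j) rfl hlen,
    show n - 2 + 1 = n - 1 by omega] at this
  simp only at this
  omega

theorem rk_eq_of_forall_arcδ_eq (hn2 : 2 ≤ n) {c : ℕ} (hc : c < n)
    (h : ∀ k, k + 1 < n → arcδ n hn w k = c) : rk n hn w = 2 * ((n - 1) * c / n) := by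
  rw [rk_eq_of_forall_arcδ_lt hn w hn2 fun k hk => (h k hk).trans_lt hc,
    sum_congr rfl fun k hk => h k (by have := mem_range.1 hk; omega), sum_const, card_range,
    smul_eq_mul]

theorem rk_eq_zero_iff_isPosWord (hn2 : 2 ≤ n) (hadm : Admissible n w)
    (hlast : arcδ n hn w (n - 2) < n) : rk n hn w = 0 ↔ isPosWord n w := by
  rw [isPosWord_iff hn w]
  constructor
  · intro h0
    have hsingle : (rkAux n (arcDir n hn w) (arcLen n hn w) (n - 2)).1 = 1 := by
      have := rk_add_one hn w
      rw [h0, rkAux.weight] at this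
      omega
    have hlt := forall_arcδ_lt_of_forall_arcDir_eq hn w hlast
      (rkAux.forall_dir_eq_of_fst_eq_one hsingle)
    rw [rk_eq_of_forall_arcδ_lt hn w hn2 hlt] at h0
    have hge : ∀ k ∈ range (n - 1), 1 ≤ arcδ n hn w k := fun k hk =>
      Nat.pos_of_ne_zero fun h =>
        not_dvd_arcδ hn w hadm (k := k) (by have := mem_range.1 hk; omega) (h ▸ dvd_zero n)
    have hsum_lt : ∑ k ∈ range (n - 1), arcδ n hn w k < n := by
      rw [← Nat.div_eq_zero_iff_lt (by omega)]
      omega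
    have hsum : ∑ _k ∈ range (n - 1), 1 = ∑ k ∈ range (n - 1), arcδ n hn w k :=
      le_antisymm (sum_le_sum hge) <| by
        simp only [sum_const, card_range, smul_eq_mul, mul_one]
        omega
    exact fun k hk => ((sum_eq_sum_iff_of_le hge).1 hsum k (mem_range.2 (by omega))).symm
  · intro h
    rw [rk_eq_of_forall_arcδ_eq hn w hn2 (by omega) h, mul_one, Nat.div_eq_of_lt (by omega)]

theorem rk_eq_two_mul_iff_isNegWord (hn2 : 2 ≤ n) (hadm : Admissible n w)
    (hlast : arcδ n hn w (n - 2) < n) : rk n hn w = 2 * (n - 2) ↔ isNegWord n w := by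
  have hsq : (n - 1) * (n - 1) = n * (n - 2) + 1 := by
    obtain ⟨m, rfl⟩ : ∃ m, n = m + 2 := ⟨n - 2, by omega⟩
    rw [show m + 2 - 1 = m + 1 by omega, show m + 2 - 2 = m by omega]
    ring
  rw [isNegWord_iff hn w]
  constructor
  · intro hmax
    have hlen : ∀ j ≤ n - 2, arcLen n hn w j < n := fun j hj =>
      arcLen_lt hn w hadm (k := j) (by omega)
    have hlt := forall_arcδ_lt_of_forall_arcDir_eq hn w hlast
      (rkAux.forall_dir_eq_of_weight_eq hlen (by have := rk_add_one hn w; omega))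
    rw [rk_eq_of_forall_arcδ_lt hn w hn2 hlt] at hmax
    have hle : ∀ k ∈ range (n - 1), arcδ n hn w k ≤ n - 1 := fun k hk =>
      Nat.le_pred_of_lt (hlt k (by have := mem_range.1 hk; omega))
    have hsum_ge : n * (n - 2) ≤ ∑ k ∈ range (n - 1), arcδ n hn w k := by
      rw [mul_comm, ← Nat.le_div_iff_mul_le (by omega)]
      omega
    have hsum_ne : ∑ k ∈ range (n - 1), arcδ n hn w k ≠ n * (n - 2) := fun h =>
      not_dvd_sum_arcδ hn w hadm (i := 0) (m := n - 1) (by omega) (by omega)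
        (by simpa only [zero_add, h] using dvd_mul_right n (n - 2))
    have hsum : ∑ k ∈ range (n - 1), arcδ n hn w k = ∑ _k ∈ range (n - 1), (n - 1) :=
      le_antisymm (sum_le_sum hle) (by simp only [sum_const, card_range, smul_eq_mul]; omega)
    exact fun k hk => (sum_eq_sum_iff_of_le hle).1 hsum k (mem_range.2 (by omega))
  · intro h
    rw [rk_eq_of_forall_arcδ_eq hn w hn2 (by omega) h, hsq, Nat.mul_add_div (by omega),
      Nat.div_eq_of_lt (by omega), add_zero]

end Labels

/-- for `n ≥ 2` and `w ∈ 𝔚⁺` admissible: the totally positive word has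
rank `0`, the totally negative word has rank `2(n-2)`, every other word has rank
strictly between, and `m_{{1,2}}(w) > 0` iff `rk(w)` is even. -/
theorem rank_range (n : ℕ) (hn : 2 ≤ n) (w : ZMod (2 * n) ≃ Fin n × Bool)
    (hadm : ∀ ℓ : Fin n, w.symm (ℓ, true) = w.symm (ℓ, false) + (n : ZMod (2 * n)))
    (hWplus : arcδ n (by omega) w (n - 2) < n) :
    (isPosWord n w → rk n (by omega) w = 0) ∧
    (isNegWord n w → rk n (by omega) w = 2 * (n - 2)) ∧
    (¬ isPosWord n w → ¬ isNegWord n w →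
      0 < rk n (by omega) w ∧ rk n (by omega) w < 2 * (n - 2)) ∧
    (arcδ n (by omega) w 0 < n ↔ Even (rk n (by omega) w)) := by
  have hn0 : 0 < n := by omega
  have hzero := rk_eq_zero_iff_isPosWord hn0 w hn hadm hWplus
  have hmax := rk_eq_two_mul_iff_isNegWord hn0 w hn hadm hWplus
  refine ⟨hzero.2, hmax.2, fun hpos hneg => ⟨?_, ?_⟩, (even_rk_iff hn0 w hWplus).symm⟩
  · exact Nat.pos_of_ne_zero (mt hzero.1 hpos)
  · exact (rk_le hn0 w hn hadm).lt_of_ne (mt hmax.1 hneg)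
end
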